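/- arXiv:0812.1134 — 9 statements merged into one kernel-verified Lean document; each statement's English description precedes it below -/
import Mathlib

section
/- Suppose σ_1, …, σ_m are subsets of A, each consisting of r vectors that are linearly independent over ℝ, such that C(A) is the union of the cones of nonnegative real linear combinations of σ_1, …, σ_m. Then for every α ∈ ℝ^r the set of apexpoints of K_α is finite and its cardinality σ(A,α) is at most Σ_{i=1}^m |det(σ_i)|, where |det(σ_i)| is the absolute value of the determinant of the matrix whose columns are the r vectors of σ_i. -/
/-- The cone `C(A)` of nonnegative real linear combinations of the integer vectors `a i`. -/
def coneOf {r N : ℕ} (a : Fin N → Fin r → ℤ) : Set (Fin r → ℝ) :=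
  {x | ∃ c : Fin N → ℝ, (∀ i, 0 ≤ c i) ∧ x = ∑ i, c i • fun j => (a i j : ℝ)}

/-- `K_α = (α + ℤ^r) ∩ C(A)`. -/
def Kset {r N : ℕ} (a : Fin N → Fin r → ℤ) (α : Fin r → ℝ) : Set (Fin r → ℝ) :=
  {x | (∃ m : Fin r → ℤ, x = fun j => α j + (m j : ℝ)) ∧ x ∈ coneOf a}

/-- `p ∈ K_α` is an apexpoint if `p ∉ q + C(A)` for every `q ∈ K_α` with `q ≠ p`. -/
def IsApex {r N : ℕ} (a : Fin N → Fin r → ℤ) (α : Fin r → ℝ) (p : Fin r → ℝ) : Prop :=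
  p ∈ Kset a α ∧ ∀ q ∈ Kset a α, q ≠ p → p - q ∉ coneOf a


lemma card_quot_det {r : ℕ} (M : Matrix (Fin r) (Fin r) ℤ) (hM : M.det ≠ 0) :
    (LinearMap.range (Matrix.toLin' M)).toAddSubgroup.index = M.det.natAbs := by
  classical
  set P := LinearMap.range (Matrix.toLin' M) with hP
  have hinj : Function.Injective (Matrix.toLin' M) := by
    rw [injective_iff_map_eq_zero]
    intro x hx
    by_contra hx0
    exact hM (Matrix.exists_mulVec_eq_zero_iff.mp ⟨x, hx0, by simpa [Matrix.toLin'_apply] using hx⟩)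
  let e : (Fin r → ℤ) ≃ₗ[ℤ] P := LinearEquiv.ofInjective _ hinj
  obtain ⟨n, snf⟩ := P.smithNormalForm (Pi.basisFun ℤ (Fin r))
  have hn : n = r := by
    have hc := card_eq_of_linearEquiv ℤ (snf.bN.equivFun.symm.trans e.symm)
    simpa using hc
  subst hn
  have hbij : Function.Bijective snf.f := Finite.injective_iff_bijective.mp snf.f.injective
  let fE : Fin n ≃ Fin n := Equiv.ofBijective snf.f hbij
  let e' : (Fin n → ℤ) ≃ₗ[ℤ] P := snf.bM.equiv snf.bN fE.symm
  have hdet1 : LinearMap.det (P.subtype ∘ₗ (e : (Fin n → ℤ) →ₗ[ℤ] P)) = M.det := by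
    have h1 : P.subtype ∘ₗ (e : (Fin n → ℤ) →ₗ[ℤ] P) = Matrix.toLin' M := by
      refine LinearMap.ext fun x => ?_
      exact LinearEquiv.ofInjective_apply (h := hinj) (Matrix.toLin' M) x
    rw [h1, LinearMap.det_toLin']
  have hassoc := LinearMap.associated_det_comp_equiv P.subtype e e'
  have hdiag : LinearMap.toMatrix snf.bM snf.bM (P.subtype ∘ₗ (e' : (Fin n → ℤ) →ₗ[ℤ] P))
      = Matrix.diagonal (fun i => snf.a (fE.symm i)) := by
    ext i j
    rw [LinearMap.toMatrix_apply]
    have h2 : (P.subtype ∘ₗ (e' : (Fin n → ℤ) →ₗ[ℤ] P)) (snf.bM j)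
        = snf.a (fE.symm j) • snf.bM j := by
      have : e' (snf.bM j) = snf.bN (fE.symm j) := snf.bM.equiv_apply _ _ _
      simp only [LinearMap.comp_apply, LinearEquiv.coe_coe, this, Submodule.coe_subtype]
      rw [snf.snf]
      congr 1
      exact congrArg snf.bM (fE.apply_symm_apply j)
    rw [h2, map_smul, Module.Basis.repr_self]
    by_cases h : i = j
    · subst h; simp
    · simp [Matrix.diagonal_apply_ne _ h, Finsupp.single_apply, Ne.symm h]
  have hdet2 : (LinearMap.det (P.subtype ∘ₗ (e' : (Fin n → ℤ) →ₗ[ℤ] P))).natAbs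
      = ∏ i, (snf.a i).natAbs := by
    rw [← LinearMap.det_toMatrix snf.bM, hdiag, Matrix.det_diagonal]
    rw [← Equiv.prod_comp fE.symm (fun i => (snf.a i).natAbs)]
    exact map_prod Int.natAbsHom _ _
  have hidx := snf.toAddSubgroup_index_eq_pow_mul_prod
  simp only [Fintype.card_fin, Nat.sub_self, pow_zero, one_mul,
    Ideal.span_singleton_toAddSubgroup_eq_zmultiples, Int.index_zmultiples] at hidx
  rw [hidx, ← hdet2, ← Int.natAbs_eq_iff_associated.mpr hassoc, hdet1]

lemma mulVec_eq_sum {R : Type*} [CommRing R] {r : ℕ} (w : Fin r → Fin r → R) (c : Fin r → R) :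
    (Matrix.of fun j' j => w j j').mulVec c = ∑ j, c j • w j := by
  funext j'
  simp [Matrix.mulVec, dotProduct, Finset.sum_apply, mul_comm]

lemma combo_mem_coneOf {r N : ℕ} (a : Fin N → Fin r → ℤ) (τ : Fin r → Fin N)
    (c : Fin r → ℝ) (hc : ∀ j, 0 ≤ c j) :
    (∑ j, c j • fun j' => (a (τ j) j' : ℝ)) ∈ coneOf a := by
  classical
  refine ⟨fun t => ∑ j, if τ j = t then c j else 0, fun t => Finset.sum_nonneg fun j _ => ?_, ?_⟩
  · split <;> simp [hc j]
  · symm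
    calc ∑ t, (∑ j, if τ j = t then c j else 0) • (fun j' => (a t j' : ℝ))
        = ∑ t, ∑ j, (if τ j = t then c j else 0) • (fun j' => (a t j' : ℝ)) := by
          simp_rw [Finset.sum_smul]
      _ = ∑ j, ∑ t, (if τ j = t then c j else 0) • (fun j' => (a t j' : ℝ)) :=
          Finset.sum_comm
      _ = ∑ j, c j • (fun j' => (a (τ j) j' : ℝ)) := by
          refine Finset.sum_congr rfl fun j _ => ?_
          simp [ite_smul, Finset.sum_ite_eq]

lemma ncard_biUnion_le {α ι : Type*} [DecidableEq ι] (F : Finset ι) (T : ι → Set α) :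
    (⋃ i ∈ F, T i).ncard ≤ ∑ i ∈ F, (T i).ncard := by
  classical
  induction F using Finset.induction with
  | empty => simp
  | @insert a s ha ih =>
      rw [Finset.sum_insert ha]
      calc (⋃ i ∈ insert a s, T i).ncard = ((T a) ∪ ⋃ i ∈ s, T i).ncard := by
            rw [Finset.set_biUnion_insert]
        _ ≤ (T a).ncard + (⋃ i ∈ s, T i).ncard := Set.ncard_union_le _ _
        _ ≤ _ := Nat.add_le_add_left ih _

/-- if `C(A)` is covered by simplicial cones spanned by `r`-element linearly
independent subsets `σ 1, …, σ m` of `A`, then for every `α` the set of apexpoints of `K_α`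
is finite of cardinality at most `∑ i |det σ_i|`. -/
theorem signature_le_sum_det (r N m : ℕ) (a : Fin N → Fin r → ℤ)
    (hspan : Submodule.span ℤ (Set.range a) = ⊤)
    (hhom : ∃ h : (Fin r → ℝ) →ₗ[ℝ] ℝ, ∀ i, h (fun j => (a i j : ℝ)) = 1)
    (σs : Fin m → Fin r → Fin N)
    (hindep : ∀ i, LinearIndependent ℝ (fun j => fun j' => (a (σs i j) j' : ℝ)))
    (hcover : coneOf a = ⋃ i, {x : Fin r → ℝ | ∃ c : Fin r → ℝ, (∀ j, 0 ≤ c j) ∧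
        x = ∑ j, c j • fun j' => (a (σs i j) j' : ℝ)})
    (α : Fin r → ℝ) :
    {x : Fin r → ℝ | IsApex a α x}.Finite ∧
    {x : Fin r → ℝ | IsApex a α x}.ncard ≤
      ∑ i, (Matrix.det (Matrix.of fun j' j => a (σs i j) j')).natAbs := by
  classical
  obtain ⟨h, hh⟩ := hhom
  set T : Fin m → Set (Fin r → ℝ) := fun i => {x | IsApex a α x} ∩
    {x : Fin r → ℝ | ∃ c : Fin r → ℝ, (∀ j, 0 ≤ c j) ∧
        x = ∑ j, c j • fun j' => (a (σs i j) j' : ℝ)} with hT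
  have hunion : {x : Fin r → ℝ | IsApex a α x} = ⋃ i, T i := by
    ext x
    simp only [hT, Set.mem_iUnion, Set.mem_inter_iff, Set.mem_setOf_eq]
    constructor
    · intro hx
      have hx2 : x ∈ coneOf a := hx.1.2
      rw [hcover] at hx2
      obtain ⟨i, hi⟩ := Set.mem_iUnion.mp hx2
      exact ⟨i, hx, hi⟩
    · rintro ⟨i, hx, -⟩; exact hx
  have key : ∀ i, (T i).Finite ∧
      (T i).ncard ≤ (Matrix.det (Matrix.of fun j' j => a (σs i j) j')).natAbs := by
    intro i
    set Mi : Matrix (Fin r) (Fin r) ℤ := Matrix.of fun j' j => a (σs i j) j' with hMi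
    have hdeti : Mi.det ≠ 0 := by
      intro h0
      have hR : (Mi.map (Int.cast : ℤ → ℝ)).det = 0 := by
        have h1 := RingHom.map_det (Int.castRingHom ℝ) Mi
        rw [h0] at h1
        simpa using h1.symm
      obtain ⟨cc, hcc0, hccz⟩ := Matrix.exists_mulVec_eq_zero_iff.mpr hR
      have hsum0 : ∑ j, cc j • (fun j' => ((a (σs i j) j' : ℤ) : ℝ)) = 0 := by
        rw [← mulVec_eq_sum (fun j j' => ((a (σs i j) j' : ℤ) : ℝ)) cc]
        exact hccz
      have hz := Fintype.linearIndependent_iff.mp (hindep i) cc hsum0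
      exact hcc0 (funext hz)
    set H : AddSubgroup (Fin r → ℤ) := (LinearMap.range (Matrix.toLin' Mi)).toAddSubgroup with hH
    have hcard : Nat.card ((Fin r → ℤ) ⧸ H) = Mi.det.natAbs := by
      rw [← card_quot_det Mi hdeti]; rfl
    have hfinQ : Finite ((Fin r → ℤ) ⧸ H) :=
      Nat.finite_of_card_ne_zero (by rw [hcard]; exact Int.natAbs_ne_zero.mpr hdeti)
    -- Step B: any apex point's simplicial coordinates are < 1
    have stepB : ∀ p : Fin r → ℝ, IsApex a α p → ∀ c : Fin r → ℝ, (∀ j, 0 ≤ c j) →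
        p = ∑ j, c j • (fun j' => ((a (σs i j) j' : ℤ) : ℝ)) → ∀ j, c j < 1 := by
      intro p hp c hc0 hpc j0
      by_contra hge
      push_neg at hge
      obtain ⟨n, hn⟩ := hp.1.1
      set w : Fin r → ℝ := fun j' => ((a (σs i j0) j' : ℤ) : ℝ) with hw
      have hsplit : ∑ j, (c j - if j = j0 then 1 else 0) • (fun j' => ((a (σs i j) j' : ℤ) : ℝ))
          = (∑ j, c j • (fun j' => ((a (σs i j) j' : ℤ) : ℝ))) - w := by
        simp [sub_smul, Finset.sum_sub_distrib, ite_smul, Finset.sum_ite_eq', hw]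
      have hqcone : p - w ∈ coneOf a := by
        have heq : p - w = ∑ j, (c j - if j = j0 then 1 else 0) •
            (fun j' => ((a (σs i j) j' : ℤ) : ℝ)) := by
          rw [hsplit, hpc]
        rw [heq]
        refine combo_mem_coneOf a (σs i) _ fun j => ?_
        by_cases hj : j = j0
        · subst hj; simp [sub_nonneg, hge]
        · simp [hj, hc0 j]
      have hqlat : ∃ mm : Fin r → ℤ, p - w = fun j => α j + (mm j : ℝ) := by
        refine ⟨fun j => n j - a (σs i j0) j, ?_⟩
        funext j'
        have hpj : p j' = α j' + (n j' : ℝ) := congrFun hn j'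
        show p j' - ((a (σs i j0) j' : ℤ) : ℝ) = α j' + ((n j' - a (σs i j0) j' : ℤ) : ℝ)
        rw [hpj]; push_cast; ring
      have hwne : w ≠ 0 := by
        intro h0
        have h1 := hh (σs i j0)
        rw [show (fun j => ((a (σs i j0) j : ℤ) : ℝ)) = w from rfl, h0, map_zero] at h1
        exact one_ne_zero h1.symm
      have hqne : p - w ≠ p := fun h0 => hwne (sub_eq_self.mp h0)
      have hwcone : w ∈ coneOf a := by
        have h2 := combo_mem_coneOf a (σs i) (fun j => if j = j0 then 1 else 0)
          (fun j => by by_cases hj : j = j0 <;> simp [hj])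
        simpa [ite_smul, Finset.sum_ite_eq', hw] using h2
      have hpq : p - (p - w) = w := sub_sub_cancel p w
      exact hp.2 (p - w) ⟨hqlat, hqcone⟩ hqne (by rw [hpq]; exact hwcone)
    -- injectivity of the class map
    have inj : ∀ x y : (Fin r → ℝ), x ∈ T i → y ∈ T i → ∀ nx ny : Fin r → ℤ,
        (x = fun j => α j + (nx j : ℝ)) → (y = fun j => α j + (ny j : ℝ)) →
        (QuotientAddGroup.mk nx : (Fin r → ℤ) ⧸ H) = QuotientAddGroup.mk ny → x = y := by
      intro x y hx hy nx ny hnx hny hcl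
      obtain ⟨cx, hcx0, hcx⟩ := hx.2
      obtain ⟨cy, hcy0, hcy⟩ := hy.2
      have hcx1 : ∀ j, cx j < 1 := stepB x hx.1 cx hcx0 hcx
      have hcy1 : ∀ j, cy j < 1 := stepB y hy.1 cy hcy0 hcy
      rw [QuotientAddGroup.eq] at hcl
      rw [hH, Submodule.mem_toAddSubgroup, LinearMap.mem_range] at hcl
      obtain ⟨z, hz⟩ := hcl
      have hz' : ∑ j, z j • (fun j' => a (σs i j) j') = ny - nx := by
        rw [← mulVec_eq_sum (fun j j' => a (σs i j) j') z]
        rw [Matrix.toLin'_apply] at hz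
        rw [show (Matrix.of fun j' j => a (σs i j) j') = Mi from rfl, hz]
        funext j'; simp [sub_eq_neg_add]
      have hcast : y - x = ∑ j, ((z j : ℝ)) • (fun j' => ((a (σs i j) j' : ℤ) : ℝ)) := by
        funext j'
        have h1 : y j' - x j' = ((ny j' - nx j' : ℤ) : ℝ) := by
          rw [congrFun hny j', congrFun hnx j']; push_cast; ring
        have h2 := congrFun hz' j'
        simp only [Finset.sum_apply, Pi.smul_apply, smul_eq_mul, Pi.sub_apply] at h2 ⊢
        rw [h1, ← h2]; push_cast; rfl
      have hdiff : ∀ j, cy j - cx j - (z j : ℝ) = 0 := by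
        have hsum : ∑ j, (cy j - cx j - (z j : ℝ)) • (fun j' => ((a (σs i j) j' : ℤ) : ℝ)) = 0 := by
          simp only [sub_smul, Finset.sum_sub_distrib]
          rw [← hcx, ← hcy, ← hcast]
          abel
        exact Fintype.linearIndependent_iff.mp (hindep i) _ hsum
      have hz0 : ∀ j, z j = 0 := by
        intro j
        have h1 := hdiff j
        have h2 : |(z j : ℝ)| < 1 := by
          rw [abs_lt]; constructor <;> nlinarith [hcx0 j, hcx1 j, hcy0 j, hcy1 j]
        have h3 : |z j| < 1 := by
          have h4 : ((|z j| : ℤ) : ℝ) < 1 := by rw [Int.cast_abs]; exact h2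
          exact_mod_cast h4
        exact Int.abs_lt_one_iff.mp h3
      have hnxy : nx = ny := by
        have h4 : ny - nx = 0 := by
          rw [← hz']
          apply Finset.sum_eq_zero
          intro j _
          rw [hz0 j, zero_smul]
        have := sub_eq_zero.mp h4
        exact this.symm
      rw [hnx, hny, hnxy]
    -- build the injection on the subtype
    have hfin2 : Finite ↥(T i) ∧ Nat.card ↥(T i) ≤ Mi.det.natAbs := by
      let g : ↥(T i) → ((Fin r → ℤ) ⧸ H) := fun x => QuotientAddGroup.mk (x.2.1.1.1.choose)
      have hg : Function.Injective g := by
        intro x y hxy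
        exact Subtype.ext (inj x.1 y.1 x.2 y.2 _ _ x.2.1.1.1.choose_spec y.2.1.1.1.choose_spec hxy)
      exact ⟨Finite.of_injective g hg, by rw [← hcard]; exact Nat.card_le_card_of_injective g hg⟩
    refine ⟨Set.finite_coe_iff.mp hfin2.1, ?_⟩
    rw [← Nat.card_coe_set_eq]
    exact hfin2.2
  constructor
  · rw [hunion]; exact Set.finite_iUnion fun i => (key i).1
  · rw [hunion]
    have h1 : (⋃ i, T i) = ⋃ i ∈ Finset.univ, T i := by simp
    rw [h1]
    exact le_trans (ncard_biUnion_le _ _) (Finset.sum_le_sum fun i _ => (key i).2)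
end

section
/- Assume additionally (iii): C(A) ∩ ℤ^r equals the set of ℤ_{≥0}-linear combinations of a_1, …, a_N. Let α ∈ ℝ^r and p ∈ α + ℤ^r. Then p is an apexpoint of K_α if and only if p ∈ C(A) and p − a_i ∉ C(A) for every i = 1, …, N. -/
lemma gen_mem_coneOf {r N : ℕ} (a : Fin N → Fin r → ℤ) (i : Fin N) :
    (fun j => (a i j : ℝ)) ∈ coneOf a := by
  refine ⟨fun k => if k = i then 1 else 0, fun k => by positivity, ?_⟩
  simp [ite_smul]

/-- under assumption (iii), a point `p ∈ α + ℤ^r` is an apexpoint of `K_α`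
iff `p ∈ C(A)` and `p - a_i ∉ C(A)` for all `i`. -/
theorem isApex_iff (r N : ℕ) (a : Fin N → Fin r → ℤ)
    (hspan : Submodule.span ℤ (Set.range a) = ⊤)
    (hhom : ∃ h : (Fin r → ℝ) →ₗ[ℝ] ℝ, ∀ i, h (fun j => (a i j : ℝ)) = 1)
    (hiii : ∀ x : Fin r → ℤ, ((fun j => (x j : ℝ)) ∈ coneOf a ↔
        ∃ c : Fin N → ℕ, x = ∑ i, c i • a i))
    (α : Fin r → ℝ) (p : Fin r → ℝ)
    (hp : ∃ m : Fin r → ℤ, p = fun j => α j + (m j : ℝ)) :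
    IsApex a α p ↔
      (p ∈ coneOf a ∧ ∀ i, (p - fun j => (a i j : ℝ)) ∉ coneOf a) := by
  obtain ⟨h, hh⟩ := hhom
  obtain ⟨m, hm⟩ := hp
  constructor
  · rintro ⟨⟨_, hpC⟩, hapex⟩
    refine ⟨hpC, fun i hcon => ?_⟩
    set q : Fin r → ℝ := p - fun j => (a i j : ℝ) with hqdef
    have hqZ : ∃ m' : Fin r → ℤ, q = fun j => α j + (m' j : ℝ) := by
      refine ⟨fun j => m j - a i j, ?_⟩
      funext j
      simp [hqdef, hm]
      push_cast
      ring
    have hne : q ≠ p := by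
      intro hEq
      have h0 : (fun j => (a i j : ℝ)) = 0 := sub_eq_self.mp hEq
      have := hh i
      rw [h0, map_zero] at this
      exact one_ne_zero this.symm
    have hpq : p - q ∈ coneOf a := by
      have : p - q = fun j => (a i j : ℝ) := by
        simp [hqdef]
      rw [this]
      exact gen_mem_coneOf a i
    exact hapex q ⟨hqZ, hcon⟩ hne hpq
  · rintro ⟨hpC, hnot⟩
    refine ⟨⟨⟨m, hm⟩, hpC⟩, ?_⟩
    rintro q ⟨⟨m', hm'⟩, hqC⟩ hne hsub
    have hx : (fun j => ((m j - m' j : ℤ) : ℝ)) = p - q := by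
      funext j
      simp only [hm, hm', Pi.sub_apply]
      push_cast
      ring
    obtain ⟨c, hc⟩ := (hiii (fun j => m j - m' j)).mp (by rw [show (fun j => (((fun j => m j - m' j) j : ℤ) : ℝ)) = p - q from hx]; exact hsub)
    by_cases hz : ∀ i, c i = 0
    · apply hne
      have : (fun j => m j - m' j) = (0 : Fin r → ℤ) := by
        rw [hc]
        apply Finset.sum_eq_zero
        intro i _
        rw [hz i, zero_smul]
      have hmm : ∀ j, m j = m' j := by
        intro j
        have := congrFun this j
        simpa [sub_eq_zero] using this
      funext j
      rw [hm, hm']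
      simp [hmm j]
    · push_neg at hz
      obtain ⟨i0, hi0⟩ := hz
      have hc1 : 1 ≤ c i0 := Nat.one_le_iff_ne_zero.mpr hi0
      apply hnot i0
      obtain ⟨d, hd0, hdq⟩ := hqC
      refine ⟨fun k => d k + ((c k : ℝ) - if k = i0 then 1 else 0), ?_, ?_⟩
      · intro k
        dsimp only
        have : (if k = i0 then (1:ℝ) else 0) ≤ (c k : ℝ) := by
          split
          · next hki => subst hki; exact_mod_cast hc1
          · positivity
        have := sub_nonneg.mpr this
        have := hd0 k
        linarith
      · have hsum : ∑ k, ((c k : ℝ)) • (fun j => (a k j : ℝ)) = p - q := by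
          rw [← hx]
          funext j
          rw [Finset.sum_apply]
          have := congrFun hc j
          rw [Finset.sum_apply] at this
          push_cast [this]
          simp
        have hind : ∑ k, (if k = i0 then (1:ℝ) else 0) • (fun j => (a k j : ℝ))
            = fun j => (a i0 j : ℝ) := by
          simp [ite_smul]
        have : ∑ k, (d k + ((c k : ℝ) - if k = i0 then 1 else 0)) • (fun j => (a k j : ℝ))
            = (∑ k, d k • (fun j => (a k j : ℝ)))
              + (∑ k, (c k : ℝ) • (fun j => (a k j : ℝ)))
              - ∑ k, (if k = i0 then (1:ℝ) else 0) • (fun j => (a k j : ℝ)) := by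
          rw [← Finset.sum_add_distrib, ← Finset.sum_sub_distrib]
          congr 1
          funext k
          rw [add_smul, sub_smul]
          abel
        rw [this, hsum, hind, ← hdq]
        abel
end

section
/- Let γ ∈ ℝ^N and k ∈ ℤ^N. Then V(k) is a compact cell if and only if P(k) ∩ (γ + L(ℝ)) is nonempty and P(k + e_i) ∩ (γ + L(ℝ)) is empty for every i = 1, …, N. Moreover, in that case V(k) = P(k) ∩ (γ + L(ℝ)). -/
/-- `L(ℝ) = ker ψ` where `ψ : ℝ^N → ℝ^r` sends `e_i ↦ a_i`. -/
def kerPsi {r N : ℕ} (a : Fin N → Fin r → ℤ) : Set (Fin N → ℝ) :=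
  {x | (∑ i, x i • fun j => (a i j : ℝ)) = 0}

/-- The shifted hyperquadrant `P(x) = x + ℝ_{≥0}^N`. -/
def Pquad {N : ℕ} (x : Fin N → ℝ) : Set (Fin N → ℝ) :=
  {y | ∀ i, x i ≤ y i}

/-- The half-open hypercube `F(k)`. -/
def Fcube {N : ℕ} (k : Fin N → ℤ) : Set (Fin N → ℝ) :=
  {x | ∀ i, (k i : ℝ) ≤ x i ∧ x i < k i + 1}

/-- The cell `V(k) = F(k) ∩ (γ + L(ℝ))`. -/
def Vcell {r N : ℕ} (a : Fin N → Fin r → ℤ) (γ : Fin N → ℝ) (k : Fin N → ℤ) :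
    Set (Fin N → ℝ) :=
  Fcube k ∩ {x | x - γ ∈ kerPsi a}

/-- `V(k)` is a compact cell if it is nonempty and compact. -/
def IsCompactCell {r N : ℕ} (a : Fin N → Fin r → ℤ) (γ : Fin N → ℝ) (k : Fin N → ℤ) : Prop :=
  (Vcell a γ k).Nonempty ∧ IsCompact (Vcell a γ k)

/-- affine segments (extended) stay in the kernel -/
lemma segment_mem_kerPsi {r N : ℕ} (a : Fin N → Fin r → ℤ) {u v : Fin N → ℝ}
    (hu : u ∈ kerPsi a) (hv : v ∈ kerPsi a) (t : ℝ) :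
    (fun j => u j + t * (v j - u j)) ∈ kerPsi a := by
  simp only [kerPsi, Set.mem_setOf_eq] at hu hv ⊢
  have key : (∑ i, (u i + t * (v i - u i)) • fun j => (a i j : ℝ))
      = (∑ i, u i • fun j => (a i j : ℝ))
        + t • ((∑ i, v i • fun j => (a i j : ℝ)) - ∑ i, u i • fun j => (a i j : ℝ)) := by
    rw [smul_sub, Finset.smul_sum, Finset.smul_sum, ← Finset.sum_sub_distrib,
      ← Finset.sum_add_distrib]
    refine Finset.sum_congr rfl fun i _ => ?_
    module
  rw [key, hu, hv]
  simp

lemma kerPsi_isClosed {r N : ℕ} (a : Fin N → Fin r → ℤ) : IsClosed (kerPsi a) := by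
  have hc : Continuous fun x : Fin N → ℝ => (∑ i, x i • fun j => (a i j : ℝ)) := by
    apply continuous_finset_sum
    exact fun i _ => (continuous_apply i).smul continuous_const
  exact isClosed_singleton.preimage hc

lemma shiftedKer_isClosed {r N : ℕ} (a : Fin N → Fin r → ℤ) (γ : Fin N → ℝ) :
    IsClosed {x : Fin N → ℝ | x - γ ∈ kerPsi a} :=
  (kerPsi_isClosed a).preimage (continuous_id.sub continuous_const)

lemma Pquad_isClosed {N : ℕ} (x : Fin N → ℝ) : IsClosed (Pquad x) := by
  have : Pquad x = ⋂ i, {y : Fin N → ℝ | x i ≤ y i} := by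
    ext y; simp [Pquad, Set.mem_iInter]
  rw [this]
  exact isClosed_iInter fun i => isClosed_le continuous_const (continuous_apply i)

lemma Vcell_subset {r N : ℕ} (a : Fin N → Fin r → ℤ) (γ : Fin N → ℝ) (k : Fin N → ℤ) :
    Vcell a γ k ⊆ Pquad (fun i => (k i : ℝ)) ∩ {x | x - γ ∈ kerPsi a} :=
  fun x hx => ⟨fun i => (hx.1 i).1, hx.2⟩

lemma subset_Vcell {r N : ℕ} (a : Fin N → Fin r → ℤ) (γ : Fin N → ℝ) (k : Fin N → ℤ)
    (hempt : ∀ i : Fin N,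
      Pquad (fun i' => ((k i' + if i' = i then 1 else 0 : ℤ) : ℝ)) ∩
        {x | x - γ ∈ kerPsi a} = ∅) :
    Pquad (fun i => (k i : ℝ)) ∩ {x | x - γ ∈ kerPsi a} ⊆ Vcell a γ k := by
  rintro x ⟨hxP, hxS⟩
  refine ⟨fun j => ⟨hxP j, ?_⟩, hxS⟩
  by_contra h
  push_neg at h
  have hx : x ∈ Pquad (fun i' => ((k i' + if i' = j then 1 else 0 : ℤ) : ℝ)) ∩
      {x | x - γ ∈ kerPsi a} := by
    refine ⟨fun i' => ?_, hxS⟩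
    by_cases hij : i' = j
    · subst hij; simp only [if_pos rfl]; push_cast; linarith
    · simp only [if_neg hij]; push_cast; linarith [hxP i']
  rw [hempt j] at hx
  exact hx

lemma forward_dir {r N : ℕ} (a : Fin N → Fin r → ℤ) (γ : Fin N → ℝ) (k : Fin N → ℤ)
    (hcc : IsCompactCell a γ k) :
    (Pquad (fun i => (k i : ℝ)) ∩ {x | x - γ ∈ kerPsi a}).Nonempty ∧
      ∀ i : Fin N,
        Pquad (fun i' => ((k i' + if i' = i then 1 else 0 : ℤ) : ℝ)) ∩
          {x | x - γ ∈ kerPsi a} = ∅ := by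
  obtain ⟨⟨x, hx⟩, hcomp⟩ := hcc
  refine ⟨⟨x, Vcell_subset a γ k hx⟩, fun i => ?_⟩
  by_contra hne
  obtain ⟨y, hyP, hyS⟩ := Set.nonempty_iff_ne_empty.mpr hne
  have hxF : x ∈ Fcube k := hx.1
  have hxS : x - γ ∈ kerPsi a := hx.2
  have hxge : ∀ j, (k j : ℝ) ≤ x j := fun j => (hxF j).1
  have hxlt : ∀ j, x j < (k j : ℝ) + 1 := fun j => (hxF j).2
  have hyge : ∀ j, (k j : ℝ) ≤ y j := by
    intro j
    have := hyP j
    by_cases hij : j = i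
    · subst hij; simp only [if_pos rfl] at this; push_cast at this; linarith
    · simp only [if_neg hij] at this; push_cast at this; linarith
  have hyi : (k i : ℝ) + 1 ≤ y i := by
    have := hyP i; simp only [if_pos rfl] at this; push_cast at this; linarith
  -- the finset of coordinates crossing the upper faces
  set s : Finset (Fin N) := Finset.univ.filter (fun j => (k j : ℝ) + 1 ≤ y j) with hs_def
  have his : i ∈ s := by simp [hs_def, hyi]
  have hsne : s.Nonempty := ⟨i, his⟩
  set tt : Fin N → ℝ := fun j => ((k j : ℝ) + 1 - x j) / (y j - x j) with htt_def
  have hd : ∀ j ∈ s, 0 < y j - x j := by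
    intro j hj
    simp only [hs_def, Finset.mem_filter] at hj
    linarith [hxlt j, hj.2]
  have htt_pos : ∀ j ∈ s, 0 < tt j := by
    intro j hj
    exact div_pos (by linarith [hxlt j]) (hd j hj)
  have htt_le : ∀ j ∈ s, tt j ≤ 1 := by
    intro j hj
    simp only [hs_def, Finset.mem_filter] at hj
    rw [htt_def, div_le_one (hd j (by simp [hs_def, hj.2]))]
    linarith [hj.2]
  set tstar : ℝ := s.inf' hsne tt with htstar_def
  have htstar_pos : 0 < tstar := (Finset.lt_inf'_iff hsne).mpr htt_pos
  obtain ⟨j0, hj0s, hj0⟩ := Finset.exists_mem_eq_inf' hsne tt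
  have htstar_le : tstar ≤ 1 := by rw [htstar_def, hj0]; exact htt_le j0 hj0s
  -- the path
  set z : ℝ → (Fin N → ℝ) := fun t => fun j => x j + t * (y j - x j) with hz_def
  have hzS : ∀ t, z t ∈ {x : Fin N → ℝ | x - γ ∈ kerPsi a} := by
    intro t
    have := segment_mem_kerPsi a hxS hyS t
    have heq : z t - γ = fun j => (x - γ) j + t * ((y - γ) j - (x - γ) j) := by
      funext j; simp only [hz_def, Pi.sub_apply]; ring
    simpa [heq] using this
  have hzV : ∀ t, 0 ≤ t → t < tstar → z t ∈ Vcell a γ k := by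
    intro t ht0 htl
    refine ⟨fun j => ⟨?_, ?_⟩, hzS t⟩
    · have h1 : t ≤ 1 := le_of_lt (lt_of_lt_of_le htl htstar_le)
      simp only [hz_def]
      nlinarith [hxge j, hyge j, mul_nonneg ht0 (sub_nonneg.mpr (hyge j)),
        mul_nonneg (sub_nonneg.mpr h1) (sub_nonneg.mpr (hxge j))]
    · by_cases hyj : (k j : ℝ) + 1 ≤ y j
      · have hjs : j ∈ s := by simp [hs_def, hyj]
        have hle : tstar ≤ tt j := Finset.inf'_le tt hjs
        have hdj : 0 < y j - x j := hd j hjs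
        have : t * (y j - x j) < tt j * (y j - x j) :=
          mul_lt_mul_of_pos_right (lt_of_lt_of_le htl hle) hdj
        rw [htt_def, div_mul_cancel₀ _ (ne_of_gt hdj)] at this
        simp only [hz_def]; linarith
      · push_neg at hyj
        have h1 : t < 1 := lt_of_lt_of_le htl htstar_le
        simp only [hz_def]
        nlinarith [mul_pos (by linarith : (0:ℝ) < 1 - t)
            (by linarith [hxlt j] : (0:ℝ) < (k j : ℝ) + 1 - x j),
          mul_nonneg ht0 (by linarith : (0:ℝ) ≤ (k j : ℝ) + 1 - y j)]
  -- z tstar is in the closure of Vcell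
  have hzcont : Continuous z := by
    apply continuous_pi
    intro j
    exact continuous_const.add (continuous_id.mul continuous_const)
  have htends : Filter.Tendsto z (nhdsWithin tstar (Set.Iio tstar)) (nhds (z tstar)) :=
    (hzcont.tendsto tstar).mono_left nhdsWithin_le_nhds
  have hev : ∀ᶠ t in nhdsWithin tstar (Set.Iio tstar), z t ∈ Vcell a γ k := by
    filter_upwards [Ioo_mem_nhdsLT htstar_pos] with t ht
    exact hzV t (le_of_lt ht.1) ht.2
  have hmem : z tstar ∈ Vcell a γ k :=
    hcomp.isClosed.closure_subset (mem_closure_of_tendsto htends hev)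
  -- but z tstar has coordinate j0 equal to k j0 + 1
  have hdj0 : 0 < y j0 - x j0 := hd j0 hj0s
  have hval : z tstar j0 = (k j0 : ℝ) + 1 := by
    have h1 : tstar = ((k j0 : ℝ) + 1 - x j0) / (y j0 - x j0) := by rw [htstar_def, hj0]
    simp only [hz_def]
    rw [h1, div_mul_cancel₀ _ (ne_of_gt hdj0)]
    ring
  have := (hmem.1 j0).2
  rw [hval] at this
  linarith

/-- `V(k)` is a compact cell iff `P(k)` meets `γ + L(ℝ)` and each `P(k + e_i)`
misses `γ + L(ℝ)`; and in that case `V(k) = P(k) ∩ (γ + L(ℝ))`. -/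
theorem compactCell_iff (r N : ℕ) (a : Fin N → Fin r → ℤ)
    (hspan : Submodule.span ℤ (Set.range a) = ⊤)
    (hhom : ∃ h : (Fin r → ℝ) →ₗ[ℝ] ℝ, ∀ i, h (fun j => (a i j : ℝ)) = 1)
    (γ : Fin N → ℝ) (k : Fin N → ℤ) :
    (IsCompactCell a γ k ↔
      ((Pquad (fun i => (k i : ℝ)) ∩ {x | x - γ ∈ kerPsi a}).Nonempty ∧
        ∀ i : Fin N,
          Pquad (fun i' => ((k i' + if i' = i then 1 else 0 : ℤ) : ℝ)) ∩
            {x | x - γ ∈ kerPsi a} = ∅)) ∧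
    (IsCompactCell a γ k →
      Vcell a γ k = Pquad (fun i => (k i : ℝ)) ∩ {x | x - γ ∈ kerPsi a}) := by
  have hrev : ∀ (_ : (Pquad (fun i => (k i : ℝ)) ∩ {x | x - γ ∈ kerPsi a}).Nonempty)
      (hempt : ∀ i : Fin N,
        Pquad (fun i' => ((k i' + if i' = i then 1 else 0 : ℤ) : ℝ)) ∩
          {x | x - γ ∈ kerPsi a} = ∅), IsCompactCell a γ k := by
    intro hne hempt
    have heq : Vcell a γ k = Pquad (fun i => (k i : ℝ)) ∩ {x | x - γ ∈ kerPsi a} :=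
      Set.Subset.antisymm (Vcell_subset a γ k) (subset_Vcell a γ k hempt)
    constructor
    · rw [heq]; exact hne
    · have hclosed : IsClosed (Vcell a γ k) := by
        rw [heq]
        exact (Pquad_isClosed _).inter (shiftedKer_isClosed a γ)
      refine IsCompact.of_isClosed_subset
        (isCompact_Icc (a := fun i => (k i : ℝ)) (b := fun i => (k i : ℝ) + 1)) hclosed ?_
      intro x hx
      rw [Set.mem_Icc]
      exact ⟨fun i => (hx.1 i).1, fun i => le_of_lt (hx.1 i).2⟩
  refine ⟨⟨forward_dir a γ k, fun ⟨hne, hempt⟩ => hrev hne hempt⟩, fun hcc => ?_⟩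
  obtain ⟨_, hempt⟩ := forward_dir a γ k hcc
  exact Set.Subset.antisymm (Vcell_subset a γ k) (subset_Vcell a γ k hempt)
end

section
/- Assume additionally (iii): C(A) ∩ ℤ^r equals the set of ℤ_{≥0}-linear combinations of a_1, …, a_N. Let α ∈ ℝ^r and choose γ ∈ ℝ^N with ψ(γ) = α. Then: (a) for k ∈ ℤ^N, V(k) is a compact cell if and only if α − ψ(k) is an apexpoint of K_α; (b) the map k ↦ α − ψ(k) sends {k ∈ ℤ^N : V(k) is a compact cell} onto the set of apexpoints of K_α, and two such k, k' have the same image if and only if k − k' ∈ L; in other words the compact cells modulo translation by L are in one-to-one correspondence with the apexpoints of K_α. -/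
/-- `ψ(k)` for an integer vector `k`, viewed in `ℝ^r`. -/
def psiInt {r N : ℕ} (a : Fin N → Fin r → ℤ) (k : Fin N → ℤ) : Fin r → ℝ :=
  fun j => ((∑ i, k i • a i) j : ℝ)


section helpers
variable {r N : ℕ} (a : Fin N → Fin r → ℤ)

/-- `ψ` as a linear map `ℝ^N → ℝ^r`. -/
def psiL : (Fin N → ℝ) →ₗ[ℝ] (Fin r → ℝ) where
  toFun c := ∑ i, c i • fun j => (a i j : ℝ)
  map_add' x y := by simp [add_smul, Finset.sum_add_distrib]
  map_smul' c x := by simp [Finset.smul_sum, mul_smul]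

lemma mem_coneOf_iff {x : Fin r → ℝ} :
    x ∈ coneOf a ↔ ∃ c : Fin N → ℝ, (∀ i, 0 ≤ c i) ∧ x = psiL a c := Iff.rfl

lemma mem_kerPsi_iff {x : Fin N → ℝ} : x ∈ kerPsi a ↔ psiL a x = 0 := Iff.rfl

lemma psiL_cast (k : Fin N → ℤ) : psiL a (fun i => (k i : ℝ)) = psiInt a k := by
  funext j
  simp only [psiL, LinearMap.coe_mk, AddHom.coe_mk, psiInt, Finset.sum_apply,
    Pi.smul_apply, smul_eq_mul]
  push_cast
  rfl

lemma psiInt_add (k k' : Fin N → ℤ) :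
    psiInt a (k + k') = psiInt a k + psiInt a k' := by
  rw [← psiL_cast, ← psiL_cast, ← psiL_cast]
  rw [show (fun i => ((k + k') i : ℝ)) = (fun i => (k i : ℝ)) + fun i => (k' i : ℝ) by
    funext i; simp [Pi.add_apply]]
  exact map_add _ _ _



/-- If `α - ψ(k)` has a nonnegative representation, it lies in `K_α`. -/
lemma memKset_of_rep {α : Fin r → ℝ} {k : Fin N → ℤ} {t : Fin N → ℝ}
    (ht : ∀ i, 0 ≤ t i) (hpt : psiL a t = α - psiInt a k) :
    α - psiInt a k ∈ Kset a α := by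
  refine ⟨⟨fun j => -(∑ i, k i • a i) j, ?_⟩, ⟨t, ht, hpt.symm⟩⟩
  funext j
  simp only [Pi.sub_apply, psiInt]
  push_cast
  ring

lemma vcell_nonempty_iff {α : Fin r → ℝ} {γ : Fin N → ℝ} (hγ : psiL a γ = α) (k : Fin N → ℤ) :
    (Vcell a γ k).Nonempty ↔
      ∃ t : Fin N → ℝ, (∀ i, 0 ≤ t i ∧ t i < 1) ∧ psiL a t = α - psiInt a k := by
  constructor
  · rintro ⟨x, hxF, hxk⟩
    rw [Set.mem_setOf_eq, mem_kerPsi_iff, map_sub, hγ, sub_eq_zero] at hxk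
    refine ⟨x - fun i => (k i : ℝ), fun i => ?_, ?_⟩
    · have := hxF i
      constructor <;> [skip; skip] <;> simp [Pi.sub_apply] <;> linarith [this.1, this.2]
    · rw [map_sub, hxk, psiL_cast]
  · rintro ⟨t, htb, hpt⟩
    refine ⟨(fun i => (k i : ℝ)) + t, fun i => ?_, ?_⟩
    · have := htb i
      constructor <;> simp [Pi.add_apply] <;> linarith [this.1, this.2]
    · rw [Set.mem_setOf_eq, mem_kerPsi_iff, map_sub, map_add, hγ, psiL_cast, hpt]
      abel

lemma h_psiL {h : (Fin r → ℝ) →ₗ[ℝ] ℝ} (hh : ∀ i, h (fun j => (a i j : ℝ)) = 1)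
    (c : Fin N → ℝ) : h (psiL a c) = ∑ i, c i := by
  have : psiL a c = ∑ i, c i • fun j => (a i j : ℝ) := rfl
  rw [this, map_sum]
  simp [hh]

lemma vcell_subset_Icc (γ : Fin N → ℝ) (k : Fin N → ℤ) :
    Vcell a γ k ⊆ Set.Icc (fun i => (k i : ℝ)) (fun i => (k i : ℝ) + 1) := by
  rintro x ⟨hxF, -⟩
  constructor <;> intro i
  · exact (hxF i).1
  · exact le_of_lt (hxF i).2

lemma isClosed_affine (γ : Fin N → ℝ) : IsClosed {x : Fin N → ℝ | x - γ ∈ kerPsi a} := by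
  have hc : Continuous fun x : Fin N → ℝ => psiL a (x - γ) :=
    (psiL a).continuous_of_finiteDimensional.comp (continuous_id.sub continuous_const)
  have : {x : Fin N → ℝ | x - γ ∈ kerPsi a} = (fun x => psiL a (x - γ)) ⁻¹' {0} := rfl
  rw [this]
  exact isClosed_singleton.preimage hc

lemma isCompact_of_isClosed_vcell {γ : Fin N → ℝ} {k : Fin N → ℤ}
    (h : IsClosed (Vcell a γ k)) : IsCompact (Vcell a γ k) :=
  (isCompact_Icc).of_isClosed_subset h (vcell_subset_Icc a γ k)



/-- If `V(k)` is closed and `α - ψ(k)` has a nonnegative representation with some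
coefficient `≥ 1`, together with a representation with coefficients in `[0,1)`,
we get a contradiction. -/
lemma escape {α : Fin r → ℝ} {γ : Fin N → ℝ} (hγ : psiL a γ = α) {k : Fin N → ℤ}
    (hcl : IsClosed (Vcell a γ k)) {t u : Fin N → ℝ}
    (ht : ∀ i, 0 ≤ t i ∧ t i < 1) (hu : ∀ i, 0 ≤ u i)
    (hpt : psiL a t = α - psiInt a k) (hpu : psiL a u = α - psiInt a k)
    (hex : ∃ i, 1 ≤ u i) : False := by
  classical
  obtain ⟨i1, hi1⟩ := hex
  set T : Finset (Fin N) := Finset.univ.filter (fun i => 1 ≤ u i) with hTdef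
  have hT : T.Nonempty := ⟨i1, by simp [hTdef, hi1]⟩
  set f : Fin N → ℝ := fun i => (1 - t i) / (u i - t i) with hfdef
  have hposd : ∀ i ∈ T, 0 < u i - t i := by
    intro i hi
    have : 1 ≤ u i := by simpa [hTdef] using hi
    linarith [(ht i).2]
  set L : ℝ := T.inf' hT f with hLdef
  obtain ⟨is, hisT, hisL⟩ := Finset.exists_mem_eq_inf' hT f
  have hus : 1 ≤ u is := by simpa [hTdef] using hisT
  have hds : 0 < u is - t is := hposd is hisT
  have hLval : L = (1 - t is) / (u is - t is) := hisL
  have hL0 : 0 < L := by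
    rw [hLval]
    exact div_pos (by linarith [(ht is).2]) hds
  have hL1 : L ≤ 1 := by
    rw [hLval, div_le_one hds]
    linarith
  set x : ℝ → (Fin N → ℝ) := fun l => (fun i => (k i : ℝ)) + (1 - l) • t + l • u with hxdef
  have hmem : ∀ l ∈ Set.Ico (0:ℝ) L, x l ∈ Vcell a γ k := by
    rintro l ⟨hl0, hlL⟩
    have hl1 : l ≤ 1 := le_trans (le_of_lt hlL) hL1
    constructor
    · intro i
      have hxi : x l i = (k i : ℝ) + ((1 - l) * t i + l * u i) := by
        simp [hxdef, Pi.add_apply, Pi.smul_apply, smul_eq_mul]; ring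
      constructor
      · rw [hxi]
        nlinarith [(ht i).1, hu i]
      · rw [hxi]
        by_cases hui : 1 ≤ u i
        · have hiT : i ∈ T := by simp [hTdef, hui]
          have hd : 0 < u i - t i := hposd i hiT
          have hlf : l < (1 - t i) / (u i - t i) :=
            lt_of_lt_of_le hlL (Finset.inf'_le f hiT)
          have : l * (u i - t i) < 1 - t i := (lt_div_iff₀ hd).mp hlf
          nlinarith
        · push_neg at hui
          rcases eq_or_lt_of_le hl0 with h | h
          · have := (ht i).2
            nlinarith
          · nlinarith [mul_nonneg (sub_nonneg.2 hl1) (sub_nonneg.2 (le_of_lt (ht i).2)),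
              mul_pos h (sub_pos.2 hui)]
    · show x l - γ ∈ kerPsi a
      rw [mem_kerPsi_iff, map_sub, hγ]
      have h1 : psiL a (x l) = psiInt a k + ((1 - l) • psiL a t + l • psiL a u) := by
        rw [hxdef]
        simp only [map_add, map_smul, psiL_cast]
        abel
      rw [h1, hpt, hpu, ← add_smul, sub_add_cancel, one_smul]
      abel
  have hcont : Continuous x := by
    rw [hxdef]
    exact ((continuous_const).add
      (((continuous_const.sub continuous_id).smul continuous_const))).add
      (continuous_id.smul continuous_const)
  have hxL : x L ∈ Vcell a γ k := by
    apply hcl.closure_subset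
    have h1 : x L ∈ x '' closure (Set.Ico 0 L) := by
      rw [closure_Ico (ne_of_lt hL0)]
      exact ⟨L, Set.right_mem_Icc.2 (le_of_lt hL0), rfl⟩
    have h2 : x '' closure (Set.Ico 0 L) ⊆ closure (x '' Set.Ico 0 L) :=
      image_closure_subset_closure_image hcont
    have h3 : closure (x '' Set.Ico 0 L) ⊆ closure (Vcell a γ k) := by
      apply closure_mono
      rintro y ⟨l, hl, rfl⟩
      exact hmem l hl
    exact h3 (h2 h1)
  have hcoord : x L is = (k is : ℝ) + 1 := by
    have hxi : x L is = (k is : ℝ) + (t is + L * (u is - t is)) := by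
      simp [hxdef, Pi.add_apply, Pi.smul_apply, smul_eq_mul]; ring
    rw [hxi, hLval, div_mul_cancel₀ _ (ne_of_gt hds)]
    ring
  have := (hxL.1 is).2
  rw [hcoord] at this
  linarith



lemma apex_of_cell
    (hiii : ∀ x : Fin r → ℤ, ((fun j => (x j : ℝ)) ∈ coneOf a ↔
        ∃ c : Fin N → ℕ, x = ∑ i, c i • a i))
    {α : Fin r → ℝ} {γ : Fin N → ℝ} (hγ : psiL a γ = α) {k : Fin N → ℤ}
    (hcell : IsCompactCell a γ k) : IsApex a α (α - psiInt a k) := by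
  obtain ⟨hne, hcpt⟩ := hcell
  obtain ⟨t, htb, hpt⟩ := (vcell_nonempty_iff a hγ k).mp hne
  refine ⟨memKset_of_rep a (fun i => (htb i).1) hpt, ?_⟩
  intro q hq hqne hpq
  obtain ⟨⟨m, hm⟩, ⟨s, hs0, hqs⟩⟩ := hq
  set xz : Fin r → ℤ := fun j => -((∑ i, k i • a i) j) - m j with hxz
  have hcast : (fun j => (xz j : ℝ)) = (α - psiInt a k) - q := by
    funext j
    rw [hm]
    simp only [hxz, Pi.sub_apply, psiInt]
    push_cast
    ring
  obtain ⟨c, hc⟩ := (hiii xz).mp (by rw [hcast]; exact hpq)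
  have hxz2 : (∑ i, ((c i : ℤ)) • a i) = xz := by
    rw [hc]; simp [natCast_zsmul]
  have hpsicz : psiInt a (fun i => (c i : ℤ)) = (α - psiInt a k) - q := by
    rw [← hcast]
    funext j
    show ((∑ i, (c i : ℤ) • a i) j : ℝ) = ((xz j : ℤ) : ℝ)
    rw [hxz2]
  have hcr : psiL a (fun i => ((c i : ℕ) : ℝ)) = (α - psiInt a k) - q := by
    have h1 : (fun i => ((c i : ℕ) : ℝ)) = fun i => (((c i : ℤ)) : ℝ) := by
      funext i; push_cast; rfl
    rw [h1, psiL_cast, hpsicz]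
  have hqs' : psiL a s = q := hqs.symm
  set u : Fin N → ℝ := s + fun i => ((c i : ℕ) : ℝ) with hudef
  have hu0 : ∀ i, 0 ≤ u i := fun i => add_nonneg (hs0 i) (Nat.cast_nonneg _)
  have hpu : psiL a u = α - psiInt a k := by
    rw [hudef, map_add, hqs', hcr]
    abel
  have hex : ∃ i, 1 ≤ u i := by
    have hcne : ∃ i, c i ≠ 0 := by
      by_contra hcz
      push_neg at hcz
      have hx0 : xz = 0 := by rw [hc]; simp [hcz]
      apply hqne
      have h0 : (α - psiInt a k) - q = 0 := by
        rw [← hcast, hx0]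
        funext j
        simp
      exact (sub_eq_zero.mp h0).symm
    obtain ⟨i, hi⟩ := hcne
    refine ⟨i, ?_⟩
    have : (1:ℝ) ≤ ((c i : ℕ) : ℝ) := by exact_mod_cast Nat.one_le_iff_ne_zero.mpr hi
    have := hs0 i
    simp only [hudef, Pi.add_apply]
    linarith
  exact escape a hγ hcpt.isClosed htb hu0 hpt hpu hex

lemma cell_of_apex
    (hhom : ∃ h : (Fin r → ℝ) →ₗ[ℝ] ℝ, ∀ i, h (fun j => (a i j : ℝ)) = 1)
    {α : Fin r → ℝ} {γ : Fin N → ℝ} (hγ : psiL a γ = α) {k : Fin N → ℤ}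
    (hapex : IsApex a α (α - psiInt a k)) : IsCompactCell a γ k := by
  classical
  obtain ⟨h, hh⟩ := hhom
  obtain ⟨⟨⟨m, hm⟩, ⟨cc, hcc0, hccrep⟩⟩, hap⟩ := hapex
  have hccrep' : psiL a cc = α - psiInt a k := hccrep.symm
  -- Step 1: nonemptiness
  set nz : Fin N → ℤ := fun i => ⌊cc i⌋ with hnzdef
  have hnz0 : ∀ i, (0:ℝ) ≤ ((nz i : ℤ) : ℝ) := by
    intro i
    have : (0:ℤ) ≤ nz i := Int.floor_nonneg.mpr (hcc0 i)
    exact_mod_cast this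
  set t : Fin N → ℝ := cc - fun i => ((nz i : ℤ) : ℝ) with htdef
  have ht : ∀ i, 0 ≤ t i ∧ t i < 1 := by
    intro i
    have h1 : t i = Int.fract (cc i) := rfl
    rw [h1]
    exact ⟨Int.fract_nonneg _, Int.fract_lt_one _⟩
  have hpt : psiL a t = α - psiInt a (k + nz) := by
    rw [htdef, map_sub, hccrep', psiL_cast, psiInt_add]
    abel
  have hq_eq : psiInt a nz = 0 := by
    by_contra hne0
    have hqK : α - psiInt a (k + nz) ∈ Kset a α :=
      memKset_of_rep a (fun i => (ht i).1) hpt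
    have hsub : (α - psiInt a k) - (α - psiInt a (k + nz)) = psiInt a nz := by
      rw [psiInt_add]; abel
    have hqne : α - psiInt a (k + nz) ≠ α - psiInt a k := by
      intro hEq
      apply hne0
      rw [← hsub, hEq, sub_self]
    refine hap _ hqK hqne ?_
    rw [hsub, ← psiL_cast]
    exact ⟨_, hnz0, rfl⟩
  have hpt' : psiL a t = α - psiInt a k := by
    rw [hpt, psiInt_add, hq_eq, add_zero]
  have hne : (Vcell a γ k).Nonempty := (vcell_nonempty_iff a hγ k).mpr ⟨t, ht, hpt'⟩
  -- Step 2: closedness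
  refine ⟨hne, isCompact_of_isClosed_vcell a ?_⟩
  by_contra hncl
  have hsub2 : Vcell a γ k ⊆
      Set.Icc (fun i => (k i : ℝ)) (fun i => (k i : ℝ) + 1) ∩ {x | x - γ ∈ kerPsi a} :=
    Set.subset_inter (vcell_subset_Icc a γ k) Set.inter_subset_right
  have hclosed2 : IsClosed (Set.Icc (fun i => (k i : ℝ)) (fun i => (k i : ℝ) + 1) ∩
      {x : Fin N → ℝ | x - γ ∈ kerPsi a}) := isClosed_Icc.inter (isClosed_affine a γ)
  have hclsub := closure_minimal hsub2 hclosed2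
  obtain ⟨x, hxcl, hxV⟩ := Set.not_subset.mp
    (fun hss => hncl (closure_subset_iff_isClosed.mp hss))
  have hxI := (hclsub hxcl).1
  have hxA : x - γ ∈ kerPsi a := (hclsub hxcl).2
  have hxF : x ∉ Fcube k := fun hF => hxV ⟨hF, hxA⟩
  have hxup : ∃ i, x i = (k i : ℝ) + 1 := by
    by_contra hno
    push_neg at hno
    apply hxF
    intro i
    refine ⟨hxI.1 i, lt_of_le_of_ne (hxI.2 i) (hno i)⟩
  obtain ⟨i0, hi0⟩ := hxup
  set S : Finset (Fin N) := Finset.univ.filter (fun i => x i = (k i : ℝ) + 1) with hSdef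
  have hSne : S.Nonempty := ⟨i0, by simp [hSdef, hi0]⟩
  set sz : Fin N → ℤ := fun i => if i ∈ S then 1 else 0 with hszdef
  have hszc : (fun i => ((sz i : ℤ) : ℝ)) = fun i => if i ∈ S then (1:ℝ) else 0 := by
    funext i
    simp [hszdef, apply_ite]
  set t' : Fin N → ℝ := x - (fun i => (k i : ℝ)) - fun i => ((sz i : ℤ) : ℝ) with ht'def
  have ht'0 : ∀ i, 0 ≤ t' i := by
    intro i
    simp only [ht'def, Pi.sub_apply]
    by_cases hiS : i ∈ S
    · have : x i = (k i : ℝ) + 1 := by simpa [hSdef] using hiS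
      simp [hszdef, hiS, this]
    · have h1 : x i ≥ (k i : ℝ) := hxI.1 i
      simp [hszdef, hiS]
      linarith
  have hpsix : psiL a x = α := by
    have h0 : psiL a (x - γ) = 0 := hxA
    rw [map_sub, hγ, sub_eq_zero] at h0
    exact h0
  have hpt'' : psiL a t' = α - psiInt a (k + sz) := by
    rw [ht'def, map_sub, map_sub, hpsix, psiL_cast, psiL_cast, psiInt_add]
    abel
  have hqK : α - psiInt a (k + sz) ∈ Kset a α := memKset_of_rep a ht'0 hpt''
  have hsub3 : (α - psiInt a k) - (α - psiInt a (k + sz)) = psiInt a sz := by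
    rw [psiInt_add]; abel
  have hsum : h (psiInt a sz) = (S.card : ℝ) := by
    rw [← psiL_cast, h_psiL a hh, hszc]
    rw [Finset.sum_ite_mem, Finset.univ_inter]
    simp
  have hszne : psiInt a sz ≠ 0 := by
    intro h0
    rw [h0, map_zero] at hsum
    have : (S.card : ℝ) ≠ 0 := by
      exact Nat.cast_ne_zero.mpr (Finset.card_pos.mpr hSne).ne'
    exact this hsum.symm
  have hqne : α - psiInt a (k + sz) ≠ α - psiInt a k := by
    intro hEq
    apply hszne
    rw [← hsub3, hEq, sub_self]
  refine hap _ hqK hqne ?_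
  rw [hsub3, ← psiL_cast]
  refine ⟨_, ?_, rfl⟩
  intro i
  have hv : ((sz i : ℤ) : ℝ) = if i ∈ S then (1:ℝ) else 0 := by
    simp [hszdef, apply_ite]
  rw [hv]
  by_cases hiS : i ∈ S <;> simp [hiS]

end helpers

/-- the compact cells modulo `L` are in one-to-one correspondence with the
apexpoints of `K_α`, via `k ↦ α - ψ(k)`. -/
theorem compactCells_biject_apexpoints (r N : ℕ) (a : Fin N → Fin r → ℤ)
    (hspan : Submodule.span ℤ (Set.range a) = ⊤)
    (hhom : ∃ h : (Fin r → ℝ) →ₗ[ℝ] ℝ, ∀ i, h (fun j => (a i j : ℝ)) = 1)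
    (hiii : ∀ x : Fin r → ℤ, ((fun j => (x j : ℝ)) ∈ coneOf a ↔
        ∃ c : Fin N → ℕ, x = ∑ i, c i • a i))
    (α : Fin r → ℝ) (γ : Fin N → ℝ)
    (hγ : (∑ i, γ i • fun j => (a i j : ℝ)) = α) :
    -- (a) V(k) is a compact cell iff α - ψ(k) is an apexpoint of K_α
    (∀ k : Fin N → ℤ, IsCompactCell a γ k ↔ IsApex a α (α - psiInt a k)) ∧
    -- (b) the map k ↦ α - ψ(k) is onto the set of apexpoints …
    (∀ x : Fin r → ℝ, IsApex a α x →
      ∃ k : Fin N → ℤ, IsCompactCell a γ k ∧ x = α - psiInt a k) ∧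
    -- … and two compact cells have the same image iff `k - k' ∈ L`
    (∀ k k' : Fin N → ℤ, IsCompactCell a γ k → IsCompactCell a γ k' →
      (α - psiInt a k = α - psiInt a k' ↔ (∑ i, (k i - k' i) • a i) = 0)) := by
  have hγL : psiL a γ = α := hγ
  refine ⟨fun k => ⟨apex_of_cell a hiii hγL, cell_of_apex a hhom hγL⟩, ?_, ?_⟩
  · intro x hx
    obtain ⟨m, hm⟩ := hx.1.1
    have hmem : (-m) ∈ Submodule.span ℤ (Set.range a) := by rw [hspan]; trivial
    obtain ⟨k, hk⟩ := (Submodule.mem_span_range_iff_exists_fun ℤ).mp hmem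
    have hxk : x = α - psiInt a k := by
      rw [hm]
      funext j
      simp only [Pi.sub_apply, psiInt, hk, Pi.neg_apply]
      push_cast
      ring
    rw [hxk] at hx
    exact ⟨k, cell_of_apex a hhom hγL hx, hxk⟩
  · intro k k' _ _
    have hdist : ∑ i, (k i - k' i) • a i = (∑ i, k i • a i) - ∑ i, k' i • a i := by
      rw [← Finset.sum_sub_distrib]
      exact Finset.sum_congr rfl (fun i _ => sub_smul _ _ _)
    constructor
    · intro hEq
      rw [hdist, sub_eq_zero]
      funext j
      have h1 := congrFun hEq j
      simp only [Pi.sub_apply] at h1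
      have h2 : psiInt a k j = psiInt a k' j := by linarith
      simp only [psiInt] at h2
      exact_mod_cast h2
    · intro h0
      rw [hdist, sub_eq_zero] at h0
      have : psiInt a k = psiInt a k' := by
        funext j
        simp only [psiInt, h0]
      rw [this]
end

section
/- Assume additionally (iii): C(A) ∩ ℤ^r equals the set of ℤ_{≥0}-linear combinations of a_1, …, a_N. Let α ∈ ℤ^r, p a prime, and β ∈ ℤ^r such that β/p is an apexpoint of K_{α/p} = (α/p + ℤ^r) ∩ C(A). Set Γ_β = {l ∈ ℤ_{≥0}^N : ψ(l) = β}. Then every l ∈ Γ_β has all coordinates strictly less than p (so each factorial l_1!⋯l_N! is invertible mod p), and the polynomial Ψ_β = Σ_{l ∈ Γ_β} (l_1!⋯l_N!)^{-1} v_1^{l_1}⋯v_N^{l_N} ∈ F_p[v_1, …, v_N] is a mod-p solution of the A-hypergeometric system with parameters (A, α). -/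
/-- The differential operator `∏ i ∂_i^(u i)` on `F_p[v_1,…,v_N]`. -/
noncomputable def derivMonomial (p N : ℕ) (u : Fin N → ℕ) :
    Module.End (ZMod p) (MvPolynomial (Fin N) (ZMod p)) :=
  (List.ofFn fun i : Fin N =>
    (((MvPolynomial.pderiv i).toLinearMap :
        Module.End (ZMod p) (MvPolynomial (Fin N) (ZMod p))) ^ (u i))).prod

/-- `Φ ∈ F_p[v_1,…,v_N]` is a mod-`p` solution of the A-hypergeometric system with
parameters `(A, α)`: it is killed by all box operators `□_l`, `l ∈ L`, and satisfies the
Euler equations `(∑_k a_{k,j} v_k ∂_k) Φ = α_j Φ`. -/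
def IsModpSolution {r N : ℕ} (p : ℕ) (a : Fin N → Fin r → ℤ) (α : Fin r → ℤ)
    (Φ : MvPolynomial (Fin N) (ZMod p)) : Prop :=
  (∀ l : Fin N → ℤ, (∑ i, l i • a i) = 0 →
      derivMonomial p N (fun i => (l i).toNat) Φ =
      derivMonomial p N (fun i => (-l i).toNat) Φ) ∧
  (∀ j : Fin r,
      (∑ k, (a k j : ZMod p) • (MvPolynomial.X k * MvPolynomial.pderiv k Φ)) =
        (α j : ZMod p) • Φ)

/-!
If some `l ∈ Γ_β` had `l_i ≥ p`, then `β/p - a_i = ∑ (l_k/p - δ_{ki}) a_k` would be a second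
point of `K_{α/p}` with `β/p ∈ (β/p - a_i) + C(A)`, contradicting apexness. So all factorials in
`Ψ_β` are units mod `p`, and `Ψ_β` differentiates like a truncated exponential: the coefficient
of `v^e` in `∂^u Ψ_β` is `(e!)⁻¹` if `ψ(e + u) = β` and `0` otherwise. The box equations follow
from `ψ(l₊) = ψ(l₋)`, the Euler equations from `β ≡ α (mod p)`.
-/
open MvPolynomial Finsupp
open scoped Nat

section PartialDerivatives

variable {R σ : Type*} [CommSemiring R]

theorem MvPolynomial.coeff_pderiv_pow (i : σ) (n : ℕ) (Φ : MvPolynomial σ R) (e : σ →₀ ℕ) :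
    coeff e ((((pderiv i).toLinearMap : Module.End R (MvPolynomial σ R)) ^ n) Φ) =
      (e i + n).descFactorial n * coeff (e + single i n) Φ := by
  induction n generalizing Φ e with
  | zero => simp
  | succ n ih =>
    rw [pow_succ, Module.End.mul_apply, ih, Derivation.coeFn_coe, coeff_pderiv, add_assoc,
      ← single_add, Finsupp.add_apply, single_eq_same, ← add_assoc (e i) n 1,
      Nat.succ_descFactorial_succ]
    push_cast
    ring

theorem MvPolynomial.coeff_list_prod_pderiv_pow (u : σ → ℕ) (Φ : MvPolynomial σ R) :
    ∀ (l : List σ), l.Nodup → ∀ e : σ →₀ ℕ,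
      coeff e ((l.map fun i =>
          ((pderiv i).toLinearMap : Module.End R (MvPolynomial σ R)) ^ u i).prod Φ) =
        (l.map fun i => ((e i + u i).descFactorial (u i) : R)).prod *
          coeff (e + (l.map fun i => single i (u i)).sum) Φ
  | [], _, e => by simp
  | i :: l, hl, e => by
    rw [List.nodup_cons] at hl
    have hfix : ∀ k ∈ l, (e + single i (u i)) k = e k := fun k hk => by
      rw [Finsupp.add_apply, single_eq_of_ne (ne_of_mem_of_not_mem hk hl.1), add_zero]
    rw [List.map_cons, List.prod_cons, Module.End.mul_apply, coeff_pderiv_pow,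
      coeff_list_prod_pderiv_pow u Φ l hl.2, List.map_congr_left fun k hk => by rw [hfix k hk]]
    simp only [List.map_cons, List.prod_cons, List.sum_cons, add_assoc, mul_assoc]

theorem MvPolynomial.coeff_X_mul_pderiv (k : σ) (Φ : MvPolynomial σ R) (e : σ →₀ ℕ) :
    coeff e (X k * pderiv k Φ) = e k * coeff e Φ := by
  classical
  rw [coeff_X_mul', coeff_pderiv]
  split_ifs with hk
  · have hpos : 1 ≤ e k := Nat.one_le_iff_ne_zero.2 (Finsupp.mem_support_iff.1 hk)
    rw [tsub_add_cancel_of_le (single_le_iff.2 hpos), tsub_apply, single_eq_same,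
      ← Nat.cast_add_one, Nat.sub_add_cancel hpos, mul_comm]
  · rw [Finsupp.notMem_support_iff.1 hk, Nat.cast_zero, zero_mul]

end PartialDerivatives

theorem coeff_derivMonomial {p N : ℕ} (u : Fin N → ℕ) (Φ : MvPolynomial (Fin N) (ZMod p))
    (e : Fin N →₀ ℕ) :
    coeff e (derivMonomial p N u Φ) =
      (∏ i, ((e i + u i).descFactorial (u i) : ZMod p)) *
        coeff (e + equivFunOnFinite.symm u) Φ := by
  rw [derivMonomial, List.ofFn_eq_map,
    coeff_list_prod_pderiv_pow u Φ _ (List.nodup_finRange N), Fin.prod_univ_def,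
    equivFunOnFinite_symm_eq_sum, Fin.sum_univ_def]

theorem descFactorial_mul_inv_factorial {K : Type*} [Field K] {n k : ℕ}
    (h : ((n + k)! : K) ≠ 0) :
    ((n + k).descFactorial k : K) * ((n + k)! : K)⁻¹ = (n ! : K)⁻¹ := by
  have hsplit : ((n + k)! : K) = n ! * (n + k).descFactorial k := by
    have := Nat.factorial_mul_descFactorial (le_add_self : k ≤ n + k)
    rw [Nat.add_sub_cancel] at this
    rw [← this, Nat.cast_mul]
  rw [hsplit] at h ⊢
  rw [mul_inv, mul_left_comm, mul_inv_cancel₀ (right_ne_zero_of_mul h), mul_one]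

theorem ZMod.factorial_ne_zero {p m : ℕ} [Fact p.Prime] (hm : m < p) : (m ! : ZMod p) ≠ 0 := by
  rw [Ne, ZMod.natCast_eq_zero_iff, (Fact.out : p.Prime).dvd_factorial]
  omega

section DividedPowerSum

variable {p N : ℕ} [Fact p.Prime]

theorem coeff_derivMonomial_of_coeff_eq_ite (P : (Fin N →₀ ℕ) → Prop) [DecidablePred P]
    (hP : ∀ d, P d → ∀ i, d i < p) {Φ : MvPolynomial (Fin N) (ZMod p)}
    (hΦ : ∀ d, coeff d Φ = if P d then (∏ i, ((d i)! : ZMod p))⁻¹ else 0)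
    (u : Fin N → ℕ) (e : Fin N →₀ ℕ) :
    coeff e (derivMonomial p N u Φ) =
      if P (e + equivFunOnFinite.symm u) then (∏ i, ((e i)! : ZMod p))⁻¹ else 0 := by
  rw [coeff_derivMonomial, hΦ]
  split_ifs with h
  · rw [← Finset.prod_inv_distrib, ← Finset.prod_inv_distrib, ← Finset.prod_mul_distrib]
    refine Finset.prod_congr rfl fun i _ => ?_
    have hlt : e i + u i < p := by simpa using hP _ h i
    simpa using descFactorial_mul_inv_factorial (ZMod.factorial_ne_zero hlt)
  · rw [mul_zero]

end DividedPowerSum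

section Cone

variable {r N : ℕ} {a : Fin N → Fin r → ℤ}

theorem generator_mem_coneOf (i : Fin N) : (fun j => (a i j : ℝ)) ∈ coneOf a :=
  ⟨Pi.single i 1, fun k => by by_cases hk : k = i <;> simp [hk],
    by simp [Pi.single_apply, ite_smul]⟩

theorem IsApex.coeff_lt_one {γ x : Fin r → ℝ} (hx : IsApex a γ x)
    (ha : ∀ i, (fun j => (a i j : ℝ)) ≠ 0) {c : Fin N → ℝ} (hc : ∀ i, 0 ≤ c i)
    (hxc : x = ∑ k, c k • fun j => (a k j : ℝ)) (i : Fin N) : c i < 1 := by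
  by_contra! hi
  obtain ⟨⟨m, hm⟩, -⟩ := hx.1
  refine hx.2 (x - fun j => (a i j : ℝ)) ⟨⟨m - a i, ?_⟩, c - Pi.single i 1, fun k => ?_, ?_⟩
    (mt sub_eq_self.1 (ha i)) (by simpa using generator_mem_coneOf i)
  · funext j
    simp only [hm, Pi.sub_apply, Int.cast_sub]
    ring
  · by_cases hk : k = i
    · simp [hk, hi]
    · simp [hk, hc k]
  · simp [hxc, sub_smul, Finset.sum_sub_distrib, Pi.single_apply, ite_smul]

theorem IsApex.lt_of_sum_smul_eq {p : ℕ} (hp : 0 < p) {γ : Fin r → ℝ} {β : Fin r → ℤ}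
    (hβ : IsApex a γ (fun j => (β j : ℝ) / p)) (ha : ∀ i, (fun j => (a i j : ℝ)) ≠ 0)
    {l : Fin N → ℕ} (hl : ∑ i, (l i : ℤ) • a i = β) (i : Fin N) : l i < p := by
  have hpR : (0 : ℝ) < p := Nat.cast_pos.2 hp
  have h := hβ.coeff_lt_one ha (c := fun k => l k / p) (fun k => by positivity) ?_ i
  · rwa [div_lt_one hpR, Nat.cast_lt] at h
  · funext j
    simp [← hl, Finset.sum_div, div_mul_eq_mul_div]

theorem intCast_zmod_eq_of_div_mem_Kset {p : ℕ} (hp : p ≠ 0) {α β : Fin r → ℤ}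
    (h : (fun j => (β j : ℝ) / p) ∈ Kset a (fun j => (α j : ℝ) / p)) (j : Fin r) :
    (β j : ZMod p) = α j := by
  obtain ⟨⟨m, hm⟩, -⟩ := h
  have hR : (β j : ℝ) = α j + p * m j := by
    have := congrFun hm j
    field_simp at this
    linarith
  have hZ : β j = α j + p * m j := by exact_mod_cast hR
  simp [hZ]

end Cone

theorem Finset.sum_toNat_smul_eq_sum_toNat_neg_smul {ι M : Type*} [AddCommGroup M]
    (s : Finset ι) {l : ι → ℤ} {v : ι → M} (hl : ∑ i ∈ s, l i • v i = 0) :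
    ∑ i ∈ s, ((l i).toNat : ℤ) • v i = ∑ i ∈ s, ((-l i).toNat : ℤ) • v i := by
  rw [← sub_eq_zero, ← Finset.sum_sub_distrib, ← hl]
  refine Finset.sum_congr rfl fun i _ => ?_
  rw [← sub_smul, Int.toNat_sub_toNat_neg]

theorem Finsupp.sum_add_equivFunOnFinite_symm_smul {ι M : Type*} [Fintype ι] [AddCommGroup M]
    (v : ι → M) (e : ι →₀ ℕ) (u : ι → ℕ) :
    ∑ i, ((e + equivFunOnFinite.symm u) i : ℤ) • v i =
      ∑ i, (e i : ℤ) • v i + ∑ i, (u i : ℤ) • v i := by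
  simp [add_smul, Finset.sum_add_distrib]

section Solution

variable {r N p : ℕ} {a : Fin N → Fin r → ℤ} {β : Fin r → ℤ}
  {Φ : MvPolynomial (Fin N) (ZMod p)}

theorem euler_eq_of_support {α : Fin r → ℤ} (hαβ : ∀ j, (β j : ZMod p) = α j)
    (hΦ : ∀ d, coeff d Φ ≠ 0 → ∑ i, (d i : ℤ) • a i = β) (j : Fin r) :
    ∑ k, (a k j : ZMod p) • (X k * pderiv k Φ) = (α j : ZMod p) • Φ := by
  ext e
  simp only [coeff_sum, coeff_smul, coeff_X_mul_pderiv, smul_eq_mul]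
  by_cases he : coeff e Φ = 0
  · simp [he]
  · have hj : ∑ k, (e k : ℤ) * a k j = β j := by simpa using congrFun (hΦ e he) j
    rw [← hαβ, ← hj, Int.cast_sum, Finset.sum_mul]
    refine Finset.sum_congr rfl fun k _ => ?_
    push_cast
    ring

variable [Fact p.Prime]

theorem derivMonomial_toNat_eq_of_coeff_eq_ite
    (hβ : ∀ d : Fin N →₀ ℕ, ∑ i, (d i : ℤ) • a i = β → ∀ i, d i < p)
    (hΦ : ∀ d, coeff d Φ =
      if ∑ i, (d i : ℤ) • a i = β then (∏ i, ((d i)! : ZMod p))⁻¹ else 0)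
    {l : Fin N → ℤ} (hl : ∑ i, l i • a i = 0) :
    derivMonomial p N (fun i => (l i).toNat) Φ = derivMonomial p N (fun i => (-l i).toNat) Φ := by
  ext e
  rw [coeff_derivMonomial_of_coeff_eq_ite _ hβ hΦ, coeff_derivMonomial_of_coeff_eq_ite _ hβ hΦ,
    sum_add_equivFunOnFinite_symm_smul, sum_add_equivFunOnFinite_symm_smul,
    Finset.sum_toNat_smul_eq_sum_toNat_neg_smul _ hl]

theorem isModpSolution_of_coeff_eq_ite {α : Fin r → ℤ} (hαβ : ∀ j, (β j : ZMod p) = α j)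
    (hβ : ∀ d : Fin N →₀ ℕ, ∑ i, (d i : ℤ) • a i = β → ∀ i, d i < p)
    (hΦ : ∀ d, coeff d Φ =
      if ∑ i, (d i : ℤ) • a i = β then (∏ i, ((d i)! : ZMod p))⁻¹ else 0) :
    IsModpSolution p a α Φ :=
  ⟨fun _ hl => derivMonomial_toNat_eq_of_coeff_eq_ite hβ hΦ hl,
    euler_eq_of_support hαβ fun d hd => by_contra fun h => hd (by rw [hΦ, if_neg h])⟩

end Solution

theorem apex_gives_modp_solution_general (r N : ℕ) (p : ℕ) (hp : p.Prime)
    (a : Fin N → Fin r → ℤ)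
    (hhom : ∃ h : (Fin r → ℝ) →ₗ[ℝ] ℝ, ∀ i, h (fun j => (a i j : ℝ)) = 1)
    (α β : Fin r → ℤ)
    (happex : IsApex a (fun j => (α j : ℝ) / p) (fun j => (β j : ℝ) / p)) :
    (∀ l : Fin N → ℕ, (∑ i, (l i : ℤ) • a i) = β → ∀ i, l i < p) ∧
    ∃ Ψ : MvPolynomial (Fin N) (ZMod p),
      (∀ d : Fin N →₀ ℕ, Ψ.coeff d =
        if (∑ i, (d i : ℤ) • a i) = β
        then (∏ i, ((d i).factorial : ZMod p))⁻¹ else 0) ∧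
      IsModpSolution p a α Ψ := by
  have := Fact.mk hp
  obtain ⟨ℓ, hℓ⟩ := hhom
  have ha : ∀ i, (fun j => (a i j : ℝ)) ≠ 0 := fun i h0 => by simpa [h0] using hℓ i
  have hlt : ∀ l : Fin N → ℕ, ∑ i, (l i : ℤ) • a i = β → ∀ i, l i < p :=
    fun _ hl => happex.lt_of_sum_smul_eq hp.pos ha hl
  refine ⟨hlt, ?_⟩
  let f : (Fin N →₀ ℕ) → ZMod p := fun d =>
    if ∑ i, (d i : ℤ) • a i = β then (∏ i, ((d i)! : ZMod p))⁻¹ else 0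
  have hf : (Function.support f).Finite :=
    (Set.finite_Iic (equivFunOnFinite.symm fun _ => p)).subset fun d hd =>
      le_def.2 fun i => by simpa using (hlt d (by_contra fun h => hd (if_neg h)) i).le
  let Ψ : MvPolynomial (Fin N) (ZMod p) := AddMonoidAlgebra.ofCoeff (ofSupportFinite f hf)
  exact ⟨Ψ, fun _ => rfl, isModpSolution_of_coeff_eq_ite
    (intCast_zmod_eq_of_div_mem_Kset hp.ne_zero happex.1) (fun d hd => hlt d hd) fun _ => rfl⟩

/-- if `β/p` is an apexpoint of `K_{α/p}`, then every `l ∈ ℤ_{≥0}^N` with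
`ψ(l) = β` has all coordinates `< p`, and the polynomial
`Ψ_β = ∑_{l ∈ Γ_β} (l₁!⋯l_N!)⁻¹ v^l` is a mod-`p` solution with parameters `(A, α)`. -/
theorem apex_gives_modp_solution (r N : ℕ) (p : ℕ) (hp : p.Prime)
    (a : Fin N → Fin r → ℤ)
    (hspan : Submodule.span ℤ (Set.range a) = ⊤)
    (hhom : ∃ h : (Fin r → ℝ) →ₗ[ℝ] ℝ, ∀ i, h (fun j => (a i j : ℝ)) = 1)
    (hiii : ∀ x : Fin r → ℤ, ((fun j => (x j : ℝ)) ∈ coneOf a ↔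
        ∃ c : Fin N → ℕ, x = ∑ i, c i • a i))
    (α β : Fin r → ℤ)
    (happex : IsApex a (fun j => (α j : ℝ) / p) (fun j => (β j : ℝ) / p)) :
    (∀ l : Fin N → ℕ, (∑ i, (l i : ℤ) • a i) = β → ∀ i, l i < p) ∧
    ∃ Ψ : MvPolynomial (Fin N) (ZMod p),
      (∀ d : Fin N →₀ ℕ, Ψ.coeff d =
        if (∑ i, (d i : ℤ) • a i) = β
        then (∏ i, ((d i).factorial : ZMod p))⁻¹ else 0) ∧
      IsModpSolution p a α Ψ :=
  apex_gives_modp_solution_general r N p hp a hhom α β happex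
end

section
/- Let n ≥ 1 and let β_0, β_1, …, β_n be positive real numbers. Then ∫_Δ (1 − y_1 − ⋯ − y_n)^{β_0 − 1} y_1^{β_1 − 1} ⋯ y_n^{β_n − 1} dy_1 ⋯ dy_n = Γ(β_0)Γ(β_1)⋯Γ(β_n) / Γ(β_0 + β_1 + ⋯ + β_n), where Δ = {y ∈ ℝ^n : y_i ≥ 0 for all i, y_1 + ⋯ + y_n ≤ 1} is the standard n-simplex and Γ is the Gamma function. -/
/-!
Peel off the first coordinate `t = y₁`: the remaining coordinates range over the simplex scaled
by `1 - t`, and the integrand is homogeneous, so the inner integral is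
`(1 - t) ^ (β₀ + β₂ + ⋯ + βₙ - 1)` times the Dirichlet integral in one dimension less. The outer
integral is then the Beta integral `B(β₁, β₀ + β₂ + ⋯ + βₙ)`, and the Gamma factors telescope
in an induction on `n`. All integrals are taken in `ℝ≥0∞`, so Tonelli and the change of variables
need no integrability hypotheses.
-/

open MeasureTheory Set
open scoped ENNReal

lemma lintegral_eq_mul_lintegral_comp_smul {E : Type*} [NormedAddCommGroup E] [NormedSpace ℝ E]
    [MeasurableSpace E] [BorelSpace E] [FiniteDimensional ℝ E] (μ : Measure E)
    [μ.IsAddHaarMeasure] (f : E → ℝ≥0∞) {r : ℝ} (hr : 0 < r) :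
    ∫⁻ x, f x ∂μ = ENNReal.ofReal (r ^ Module.finrank ℝ E) * ∫⁻ x, f (r • x) ∂μ := by
  have hpow : 0 < r ^ Module.finrank ℝ E := pow_pos hr _
  have hcomp : ∫⁻ x, f (r • x) ∂μ =
      ENNReal.ofReal (r ^ Module.finrank ℝ E)⁻¹ * ∫⁻ x, f x ∂μ := by
    rw [← smul_eq_mul, ← lintegral_smul_measure, ← abs_of_pos (inv_pos.2 hpow),
      ← Measure.map_addHaar_smul μ hr.ne']
    exact (lintegral_map_equiv f (Homeomorph.smulOfNeZero r hr.ne').toMeasurableEquiv).symm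
  rw [hcomp, ← mul_assoc, ← ENNReal.ofReal_mul hpow.le, mul_inv_cancel₀ hpow.ne',
    ENNReal.ofReal_one, one_mul]

lemma setLIntegral_Ioo_rpow_mul_one_sub_rpow {a b : ℝ} (ha : 0 < a) (hb : 0 < b) :
    ∫⁻ t in Ioo 0 1, ENNReal.ofReal (t ^ (a - 1) * (1 - t) ^ (b - 1)) =
      ENNReal.ofReal (ProbabilityTheory.beta a b) := by
  have hB := ProbabilityTheory.beta_pos ha hb
  have h := ProbabilityTheory.lintegral_betaPDF_eq_one ha hb
  simp only [ProbabilityTheory.lintegral_betaPDF, mul_assoc,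
    ENNReal.ofReal_mul (one_div_pos.2 hB).le] at h
  rw [lintegral_const_mul' _ _ ENNReal.ofReal_ne_top, ENNReal.ofReal_div_of_pos hB,
    ENNReal.ofReal_one, one_div] at h
  exact (inv_inj.1 (ENNReal.eq_inv_of_mul_eq_one_left h)).symm

namespace Dirichlet

def solidSimplex (ι : Type*) [Fintype ι] (r : ℝ) : Set (ι → ℝ) :=
  {y | (∀ i, 0 ≤ y i) ∧ ∑ i, y i ≤ r}

/-- `r - ∑ i, y i` is the implicit coordinate `y₀` of a point of the simplex of size `r`. -/
noncomputable def integrand {ι : Type*} [Fintype ι] (r β₀ : ℝ) (β : ι → ℝ) :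
    (ι → ℝ) → ℝ≥0∞ :=
  (solidSimplex ι r).indicator fun y =>
    ENNReal.ofReal ((r - ∑ i, y i) ^ (β₀ - 1) * ∏ i, y i ^ (β i - 1))

section Fintype

variable {ι : Type*} [Fintype ι]

lemma measurableSet_solidSimplex (r : ℝ) : MeasurableSet (solidSimplex ι r) := by
  simp only [solidSimplex, ofPred_and, ofPred_forall]
  exact (MeasurableSet.iInter fun i =>
      measurableSet_le measurable_const (measurable_pi_apply i)).inter
    (measurableSet_le (by fun_prop) measurable_const)

lemma nonneg_of_mem_solidSimplex {r : ℝ} {y : ι → ℝ} (hy : y ∈ solidSimplex ι r) : 0 ≤ r :=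
  (Finset.sum_nonneg fun i _ => hy.1 i).trans hy.2

lemma smul_mem_solidSimplex_iff {r : ℝ} (hr : 0 < r) {w : ι → ℝ} :
    r • w ∈ solidSimplex ι r ↔ w ∈ solidSimplex ι 1 := by
  simp [solidSimplex, ← Finset.mul_sum, mul_nonneg_iff_of_pos_left hr, mul_le_iff_le_one_right hr]

lemma measurable_integrand (r β₀ : ℝ) (β : ι → ℝ) : Measurable (integrand r β₀ β) :=
  (Measurable.ennreal_ofReal (by fun_prop)).indicator (measurableSet_solidSimplex r)

lemma integrand_smul {r : ℝ} (hr : 0 < r) (β₀ : ℝ) (β : ι → ℝ) (w : ι → ℝ) :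
    integrand r β₀ β (r • w) =
      ENNReal.ofReal (r ^ (β₀ + ∑ i, β i - 1 - Fintype.card ι)) * integrand 1 β₀ β w := by
  by_cases hw : w ∈ solidSimplex ι 1
  · rw [integrand, integrand, indicator_of_mem ((smul_mem_solidSimplex_iff hr).2 hw),
      indicator_of_mem hw, ← ENNReal.ofReal_mul (by positivity)]
    congr 1
    have hsum : ∑ i, (r • w) i = r * ∑ i, w i := by simp [Finset.mul_sum]
    have hexp : β₀ + ∑ i, β i - 1 - Fintype.card ι = (β₀ - 1) + ∑ i, (β i - 1) := by
      simp only [Finset.sum_sub_distrib, Finset.sum_const, Finset.card_univ, nsmul_eq_mul,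
        mul_one]
      ring
    rw [hsum, show r - r * ∑ i, w i = r * (1 - ∑ i, w i) by ring,
      Real.mul_rpow hr.le (by linarith [hw.2]), hexp, Real.rpow_add hr, Real.rpow_sum_of_pos hr]
    simp only [Pi.smul_apply, smul_eq_mul, Real.mul_rpow hr.le (hw.1 _), Finset.prod_mul_distrib]
    ring
  · rw [integrand, integrand, indicator_of_notMem (mt (smul_mem_solidSimplex_iff hr).1 hw),
      indicator_of_notMem hw, mul_zero]

lemma lintegral_integrand_of_pos {r : ℝ} (hr : 0 < r) (β₀ : ℝ) (β : ι → ℝ) :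
    ∫⁻ y, integrand r β₀ β y =
      ENNReal.ofReal (r ^ (β₀ + ∑ i, β i - 1)) * ∫⁻ y, integrand 1 β₀ β y := by
  rw [lintegral_eq_mul_lintegral_comp_smul volume _ hr, Module.finrank_fintype_fun_eq_card]
  simp only [integrand_smul hr]
  rw [lintegral_const_mul' _ _ ENNReal.ofReal_ne_top, ← mul_assoc,
    ← ENNReal.ofReal_mul (by positivity), ← Real.rpow_natCast, ← Real.rpow_add hr]
  ring_nf

lemma integral_solidSimplex_eq_toReal_lintegral_integrand (β₀ : ℝ) (β : ι → ℝ) :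
    ∫ y in solidSimplex ι 1, (1 - ∑ i, y i) ^ (β₀ - 1) * ∏ i, y i ^ (β i - 1) =
      (∫⁻ y, integrand 1 β₀ β y).toReal := by
  have hS := measurableSet_solidSimplex (ι := ι) 1
  have hnonneg : 0 ≤ᵐ[volume.restrict (solidSimplex ι 1)]
      fun y => (1 - ∑ i, y i) ^ (β₀ - 1) * ∏ i, y i ^ (β i - 1) :=
    ae_restrict_of_forall_mem hS fun y hy => mul_nonneg (Real.rpow_nonneg (by linarith [hy.2]) _)
      (Finset.prod_nonneg fun i _ => Real.rpow_nonneg (hy.1 i) _)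
  have hmeas : AEStronglyMeasurable
      (fun y : ι → ℝ => (1 - ∑ i, y i) ^ (β₀ - 1) * ∏ i, y i ^ (β i - 1)) := by
    fun_prop
  rw [integral_eq_lintegral_of_nonneg_ae hnonneg hmeas.restrict, ← lintegral_indicator hS]
  rfl

end Fintype

lemma cons_mem_solidSimplex_iff {n : ℕ} {r t : ℝ} {z : Fin n → ℝ} :
    Fin.cons t z ∈ solidSimplex (Fin (n + 1)) r ↔ 0 ≤ t ∧ z ∈ solidSimplex (Fin n) (r - t) := by
  simp only [solidSimplex, mem_ofPred_eq, Fin.forall_fin_succ, Fin.cons_zero, Fin.cons_succ,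
    Fin.sum_cons]
  constructor
  · rintro ⟨⟨ht, hz⟩, hsum⟩
    exact ⟨ht, hz, by linarith⟩
  · rintro ⟨ht, hz, hsum⟩
    exact ⟨⟨ht, hz⟩, by linarith⟩

/-- The `Icc` indicator only matters for `t < 0`: for `t > 1` the second factor vanishes. -/
lemma integrand_cons {n : ℕ} (β₀ : ℝ) (β : Fin (n + 1) → ℝ) (t : ℝ) (z : Fin n → ℝ) :
    integrand 1 β₀ β (Fin.cons t z) =
      (Icc 0 1).indicator (fun t => ENNReal.ofReal (t ^ (β 0 - 1))) t *
        integrand (1 - t) β₀ (Fin.tail β) z := by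
  by_cases hcons : Fin.cons t z ∈ solidSimplex (Fin (n + 1)) 1
  · obtain ⟨ht, hz⟩ := cons_mem_solidSimplex_iff.1 hcons
    have ht1 : t ∈ Icc 0 1 := ⟨ht, sub_nonneg.1 (nonneg_of_mem_solidSimplex hz)⟩
    rw [integrand, integrand, indicator_of_mem hcons, indicator_of_mem ht1, indicator_of_mem hz,
      ← ENNReal.ofReal_mul (Real.rpow_nonneg ht _)]
    simp only [Fin.sum_cons, Fin.prod_univ_succ, Fin.cons_zero, Fin.cons_succ, Fin.tail]
    ring_nf
  · rw [integrand, indicator_of_notMem hcons]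
    by_cases ht : 0 ≤ t
    · rw [integrand, indicator_of_notMem fun hz => hcons (cons_mem_solidSimplex_iff.2 ⟨ht, hz⟩),
        mul_zero]
    · rw [indicator_of_notMem fun h => ht h.1, zero_mul]

lemma lintegral_integrand_succ {n : ℕ} (β₀ : ℝ) (β : Fin (n + 1) → ℝ) :
    ∫⁻ y, integrand 1 β₀ β y =
      ∫⁻ t in Ioo 0 1,
        ENNReal.ofReal (t ^ (β 0 - 1)) * ∫⁻ z, integrand (1 - t) β₀ (Fin.tail β) z := by
  let e := MeasurableEquiv.piFinSuccAbove (fun _ : Fin (n + 1) => ℝ) 0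
  rw [← (volume_preserving_piFinSuccAbove (fun _ : Fin (n + 1) => ℝ) 0).symm.lintegral_comp_emb
      e.symm.measurableEmbedding, Measure.volume_eq_prod,
    lintegral_prod (fun q => integrand 1 β₀ β (e.symm q))
      ((measurable_integrand 1 β₀ β).comp e.symm.measurable).aemeasurable]
  simp only [e, MeasurableEquiv.piFinSuccAbove_symm_apply, Fin.insertNthEquiv, Equiv.coe_fn_mk,
    Fin.insertNth_zero', integrand_cons, lintegral_const_mul _ (measurable_integrand _ _ _)]
  rw [setLIntegral_congr Ioo_ae_eq_Icc, ← lintegral_indicator measurableSet_Icc]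
  exact lintegral_congr fun t =>
    (indicator_mul_left _ _ fun t => ∫⁻ z, integrand (1 - t) β₀ (Fin.tail β) z).symm

theorem lintegral_integrand_one (n : ℕ) (β₀ : ℝ) (β : Fin n → ℝ) (hβ₀ : 0 < β₀)
    (hβ : ∀ i, 0 < β i) :
    ∫⁻ y, integrand 1 β₀ β y =
      ENNReal.ofReal ((Real.Gamma β₀ * ∏ i, Real.Gamma (β i)) / Real.Gamma (β₀ + ∑ i, β i)) := by
  induction n with
  | zero =>
    simp [integrand, solidSimplex, volume_pi, (Real.Gamma_pos_of_pos hβ₀).ne']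
  | succ n ih =>
    set c := β₀ + ∑ i, Fin.tail β i
    have hc : 0 < c := add_pos_of_pos_of_nonneg hβ₀ (Finset.sum_nonneg fun i _ => (hβ _).le)
    have inner : ∀ t ∈ Ioo (0 : ℝ) 1,
        ENNReal.ofReal (t ^ (β 0 - 1)) * ∫⁻ z, integrand (1 - t) β₀ (Fin.tail β) z =
          ENNReal.ofReal (t ^ (β 0 - 1) * (1 - t) ^ (c - 1)) *
            ENNReal.ofReal ((Real.Gamma β₀ * ∏ i, Real.Gamma (Fin.tail β i)) / Real.Gamma c) := by
      intro t ht
      rw [lintegral_integrand_of_pos (sub_pos.2 ht.2), ih (Fin.tail β) fun i => hβ _,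
        ← mul_assoc, ← ENNReal.ofReal_mul (Real.rpow_nonneg ht.1.le _)]
    rw [lintegral_integrand_succ, setLIntegral_congr_fun measurableSet_Ioo inner,
      lintegral_mul_const' _ _ ENNReal.ofReal_ne_top,
      setLIntegral_Ioo_rpow_mul_one_sub_rpow (hβ 0) hc,
      ← ENNReal.ofReal_mul (ProbabilityTheory.beta_pos (hβ 0) hc).le]
    congr 1
    rw [ProbabilityTheory.beta, Fin.prod_univ_succ, Fin.sum_univ_succ,
      show β 0 + c = β₀ + (β 0 + ∑ i : Fin n, β i.succ) by simp only [c, Fin.tail]; ring]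
    field_simp [(Real.Gamma_pos_of_pos hc).ne']
    rfl

end Dirichlet

theorem dirichlet_integral_simplex_general (n : ℕ) (β₀ : ℝ) (β : Fin n → ℝ)
    (hβ₀ : 0 < β₀) (hβ : ∀ i, 0 < β i) :
    (∫ y in {y : Fin n → ℝ | (∀ i, 0 ≤ y i) ∧ (∑ i, y i) ≤ 1},
        (1 - ∑ i, y i) ^ (β₀ - 1) * ∏ i, (y i) ^ (β i - 1) ∂(volume)) =
      (Real.Gamma β₀ * ∏ i, Real.Gamma (β i)) / Real.Gamma (β₀ + ∑ i, β i) := by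
  have hΓ : 0 ≤ (Real.Gamma β₀ * ∏ i, Real.Gamma (β i)) / Real.Gamma (β₀ + ∑ i, β i) :=
    div_nonneg
      (mul_nonneg (Real.Gamma_pos_of_pos hβ₀).le
        (Finset.prod_nonneg fun i _ => (Real.Gamma_pos_of_pos (hβ i)).le))
      (Real.Gamma_nonneg_of_nonneg (add_nonneg hβ₀.le (Finset.sum_nonneg fun i _ => (hβ i).le)))
  rw [← ENNReal.toReal_ofReal hΓ, ← Dirichlet.lintegral_integrand_one n β₀ β hβ₀ hβ]
  exact Dirichlet.integral_solidSimplex_eq_toReal_lintegral_integrand β₀ β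

/-- the Dirichlet integral over the standard `n`-simplex:
`∫_Δ (1-∑yᵢ)^{β₀-1} ∏ yᵢ^{βᵢ-1} dy = Γ(β₀)∏Γ(βᵢ)/Γ(β₀+∑βᵢ)`. -/
theorem dirichlet_integral_simplex (n : ℕ) (hn : 1 ≤ n) (β₀ : ℝ) (β : Fin n → ℝ)
    (hβ₀ : 0 < β₀) (hβ : ∀ i, 0 < β i) :
    (∫ y in {y : Fin n → ℝ | (∀ i, 0 ≤ y i) ∧ (∑ i, y i) ≤ 1},
        (1 - ∑ i, y i) ^ (β₀ - 1) * ∏ i, (y i) ^ (β i - 1) ∂(volume)) =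
      (Real.Gamma β₀ * ∏ i, Real.Gamma (β i)) / Real.Gamma (β₀ + ∑ i, β i) :=
  dirichlet_integral_simplex_general n β₀ β hβ₀ hβ
end

section
/- Let f ∈ ℚ⟦x,y⟧ be a formal power series in two variables with constant term f(0,0) = 1 satisfying x f^3 − y = f − f^2. Set Δ = 1 + 4x + 4y + 18xy − 27x^2y^2 and g = 1 + 4x − 2xf − 3x^2 f^2. Then g(g − 1 − 3x)^2 = x^2 Δ in ℚ⟦x,y⟧. -/
open MvPowerSeries

/-- The relation eliminates `y = x f³ - f + f²`, after which both sides are the same polynomial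
in `x` and `f`. -/
theorem hornG3_relation_of_eq {R : Type*} [CommRing R] {x y f : R}
    (hf : x * f ^ 3 - y = f - f ^ 2) :
    (1 + 4 * x - 2 * x * f - 3 * x ^ 2 * f ^ 2) *
      ((1 + 4 * x - 2 * x * f - 3 * x ^ 2 * f ^ 2) - 1 - 3 * x) ^ 2 =
    x ^ 2 * (1 + 4 * x + 4 * y + 18 * x * y - 27 * x ^ 2 * y ^ 2) := by
  obtain rfl : y = x * f ^ 3 - (f - f ^ 2) := by rw [← hf]; ring
  ring

theorem hornG3_algebraic_relation_general (f : MvPowerSeries (Fin 2) ℚ)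
    (hf : (MvPowerSeries.X 0) * f ^ 3 - MvPowerSeries.X 1 = f - f ^ 2) :
    (1 + 4 * MvPowerSeries.X 0 - 2 * MvPowerSeries.X 0 * f
        - 3 * (MvPowerSeries.X 0) ^ 2 * f ^ 2) *
      ((1 + 4 * MvPowerSeries.X 0 - 2 * MvPowerSeries.X 0 * f
        - 3 * (MvPowerSeries.X 0) ^ 2 * f ^ 2) - 1 - 3 * MvPowerSeries.X 0) ^ 2 =
    (MvPowerSeries.X 0) ^ 2 *
      (1 + 4 * MvPowerSeries.X 0 + 4 * MvPowerSeries.X 1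
        + 18 * MvPowerSeries.X 0 * MvPowerSeries.X 1
        - 27 * (MvPowerSeries.X 0) ^ 2 * (MvPowerSeries.X 1) ^ 2) :=
  hornG3_relation_of_eq hf

/-- if `f ∈ ℚ⟦x,y⟧` has constant term `1` and satisfies `x f³ - y = f - f²`,
then `g = 1 + 4x - 2xf - 3x²f²` satisfies `g(g - 1 - 3x)² = x²Δ` with
`Δ = 1 + 4x + 4y + 18xy - 27x²y²`. -/
theorem hornG3_algebraic_relation (f : MvPowerSeries (Fin 2) ℚ)
    (hconst : MvPowerSeries.constantCoeff f = 1)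
    (hf : (MvPowerSeries.X 0) * f ^ 3 - MvPowerSeries.X 1 = f - f ^ 2) :
    (1 + 4 * MvPowerSeries.X 0 - 2 * MvPowerSeries.X 0 * f
        - 3 * (MvPowerSeries.X 0) ^ 2 * f ^ 2) *
      ((1 + 4 * MvPowerSeries.X 0 - 2 * MvPowerSeries.X 0 * f
        - 3 * (MvPowerSeries.X 0) ^ 2 * f ^ 2) - 1 - 3 * MvPowerSeries.X 0) ^ 2 =
    (MvPowerSeries.X 0) ^ 2 *
      (1 + 4 * MvPowerSeries.X 0 + 4 * MvPowerSeries.X 1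
        + 18 * MvPowerSeries.X 0 * MvPowerSeries.X 1
        - 27 * (MvPowerSeries.X 0) ^ 2 * (MvPowerSeries.X 1) ^ 2) :=
  hornG3_algebraic_relation_general f hf
end

section
/- Let A = {a_1, a_2, a_3, a_4} ⊂ ℤ^2 with a_1 = (−1,2), a_2 = (0,1), a_3 = (1,0), a_4 = (2,−1), so that C(A) = {(x,y) ∈ ℝ^2 : 2x + y ≥ 0, x + 2y ≥ 0}. Let a, b ∈ ℝ with a + b ∈ ℤ and a ∉ ℤ, b ∉ ℤ, and set α = (−a, −b). Then K_α has exactly three apexpoints, and every apexpoint (x,y) satisfies x + y = 1. -/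
/-- The Horn G3 set `A = {(-1,2), (0,1), (1,0), (2,-1)} ⊂ ℤ²`. -/
def hornG3 : Fin 4 → Fin 2 → ℤ := ![![-1, 2], ![0, 1], ![1, 0], ![2, -1]]

lemma cone_iff (x : Fin 2 → ℝ) :
    x ∈ coneOf hornG3 ↔ 0 ≤ 2 * x 0 + x 1 ∧ 0 ≤ x 0 + 2 * x 1 := by
  constructor
  · rintro ⟨c, hc, rfl⟩
    have h0 := hc 0; have h1 := hc 1; have h2 := hc 2; have h3 := hc 3
    simp only [Finset.sum_apply, Pi.smul_apply, smul_eq_mul, Fin.sum_univ_four, hornG3,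
      Matrix.cons_val_zero, Matrix.cons_val_one, Matrix.head_cons, Matrix.cons_val_fin_one,
      Matrix.cons_val', Int.cast_neg, Int.cast_one, Int.cast_zero, Int.cast_two,
      Int.cast_ofNat, Matrix.cons_val_two, Matrix.cons_val_three, Matrix.tail_cons,
      Matrix.vecHead]
    constructor <;> nlinarith
  · rintro ⟨h1, h2⟩
    refine ⟨![(x 0 + 2 * x 1)/3, 0, 0, (2 * x 0 + x 1)/3], ?_, ?_⟩
    · intro i; fin_cases i <;> simp <;> linarith
    · funext j
      fin_cases j <;>
        simp [Fin.sum_univ_four, hornG3, Matrix.cons_val_two, Matrix.cons_val_three,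
          Matrix.tail_cons, Matrix.vecHead] <;> ring

lemma K_struct (a b : ℝ) (N : ℤ) (hN : a + b = N) (ht : 0 < Int.fract a)
    (x : Fin 2 → ℝ) (hx : x ∈ Kset hornG3 ![-a, -b]) :
    ∃ U V s : ℤ, 1 ≤ U ∧ 0 ≤ V ∧ U + V = 3 * s ∧
      2 * x 0 + x 1 = (U : ℝ) - Int.fract a ∧
      x 0 + 2 * x 1 = (V : ℝ) + Int.fract a ∧ x 0 + x 1 = (s : ℝ) := by
  obtain ⟨⟨m, rfl⟩, hc⟩ := hx
  rw [cone_iff] at hc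
  have hfl : (⌊a⌋ : ℝ) + Int.fract a = a := Int.floor_add_fract a
  simp only [Matrix.cons_val_zero, Matrix.cons_val_one, Matrix.head_cons] at hc ⊢
  refine ⟨2 * m 0 + m 1 - N - ⌊a⌋, m 0 + 2 * m 1 - 2 * N + ⌊a⌋, m 0 + m 1 - N,
    ?_, ?_, by ring, ?_, ?_, ?_⟩
  · have : (0:ℝ) < (2 * m 0 + m 1 - N - ⌊a⌋ : ℤ) := by push_cast; linarith [hc.1]
    exact_mod_cast this
  · have : (-1:ℝ) < (m 0 + 2 * m 1 - 2 * N + ⌊a⌋ : ℤ) := by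
      push_cast
      have := Int.fract_lt_one a
      linarith [hc.2]
    have : (-1:ℤ) < m 0 + 2 * m 1 - 2 * N + ⌊a⌋ := by exact_mod_cast this
    omega
  · push_cast; linarith
  · push_cast; linarith
  · push_cast; linarith

noncomputable def Pt (a : ℝ) (k : ℤ) : Fin 2 → ℝ := ![(k:ℝ) - Int.fract a, 1 - k + Int.fract a]

lemma Pt_mem (a b : ℝ) (N : ℤ) (hN : a + b = N) (ht : 0 < Int.fract a) (k : ℤ)
    (hk0 : 0 ≤ k) (hk2 : k ≤ 2) : Pt a k ∈ Kset hornG3 ![-a, -b] := by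
  have hfl : (⌊a⌋ : ℝ) + Int.fract a = a := Int.floor_add_fract a
  have h1 := Int.fract_lt_one a
  have hk0' : (0:ℝ) ≤ (k:ℝ) := by exact_mod_cast hk0
  have hk2' : (k:ℝ) ≤ 2 := by exact_mod_cast hk2
  constructor
  · refine ⟨![k + ⌊a⌋, 1 - k + N - ⌊a⌋], ?_⟩
    funext j
    fin_cases j <;>
      simp only [Pt, Matrix.cons_val_zero, Matrix.cons_val_one, Matrix.head_cons,
        Fin.zero_eta, Fin.mk_one] <;> push_cast <;> linarith
  · rw [cone_iff]
    constructor <;>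
      simp only [Pt, Matrix.cons_val_zero, Matrix.cons_val_one, Matrix.head_cons] <;> linarith

lemma Pt_apex (a b : ℝ) (N : ℤ) (hN : a + b = N) (ht : 0 < Int.fract a) (k : ℤ)
    (hk0 : 0 ≤ k) (hk2 : k ≤ 2) : IsApex hornG3 ![-a, -b] (Pt a k) := by
  refine ⟨Pt_mem a b N hN ht k hk0 hk2, ?_⟩
  intro q hq hne hcone
  obtain ⟨U, V, s, hU, hV, hUV, h1, h2, h3⟩ := K_struct a b N hN ht q hq
  rw [cone_iff] at hcone
  have d0 : (Pt a k - q) 0 = ((k:ℝ) - Int.fract a) - q 0 := by simp [Pt]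
  have d1 : (Pt a k - q) 1 = (1 - (k:ℝ) + Int.fract a) - q 1 := by simp [Pt]
  rw [d0, d1] at hcone
  obtain ⟨hca, hcb⟩ := hcone
  -- 0 ≤ k+1 - U and 0 ≤ 2 - k - V
  have hUk : U ≤ k + 1 := by
    have : (U:ℝ) ≤ (k:ℝ) + 1 := by linarith
    exact_mod_cast this
  have hVk : V ≤ 2 - k := by
    have : (V:ℝ) ≤ 2 - (k:ℝ) := by linarith
    exact_mod_cast this
  have hs1 : 1 ≤ s := by omega
  have hUV3 : U = k + 1 ∧ V = 2 - k := by omega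
  obtain ⟨hUe, hVe⟩ := hUV3
  apply hne
  have hU' : (U:ℝ) = (k:ℝ) + 1 := by exact_mod_cast hUe
  have hV' : (V:ℝ) = 2 - (k:ℝ) := by exact_mod_cast hVe
  funext j
  fin_cases j <;>
    simp only [Pt, Matrix.cons_val_zero, Matrix.cons_val_one, Matrix.head_cons,
      Fin.zero_eta, Fin.mk_one] <;> linarith


/-- for the Horn G3 configuration, if `a + b ∈ ℤ` and `a, b ∉ ℤ`, then
`K_{(-a,-b)}` has exactly three apexpoints, all lying on the line `x + y = 1`. -/
theorem hornG3_three_apexpoints_on_line (a b : ℝ)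
    (hab : ∃ n : ℤ, a + b = n) (ha : ¬ ∃ n : ℤ, a = n) (hb : ¬ ∃ n : ℤ, b = n) :
    ({x : Fin 2 → ℝ | IsApex hornG3 ![-a, -b] x}.Finite ∧
      {x : Fin 2 → ℝ | IsApex hornG3 ![-a, -b] x}.ncard = 3) ∧
    ∀ x : Fin 2 → ℝ, IsApex hornG3 ![-a, -b] x → x 0 + x 1 = 1 := by
  obtain ⟨N, hN⟩ := hab
  have ht : 0 < Int.fract a := by
    rcases lt_or_eq_of_le (Int.fract_nonneg a) with h | h
    · exact h
    · exact absurd ⟨⌊a⌋, by linarith [Int.floor_add_fract a]⟩ ha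
  have hSeq : {x : Fin 2 → ℝ | IsApex hornG3 ![-a, -b] x} = {Pt a 0, Pt a 1, Pt a 2} := by
    ext x
    simp only [Set.mem_setOf_eq, Set.mem_insert_iff, Set.mem_singleton_iff]
    constructor
    · intro hx
      obtain ⟨U, V, s, hU, hV, hUV, h1, h2, h3⟩ := K_struct a b N hN ht x hx.1
      have hs1 : 1 ≤ s := by omega
      have hsle : s ≤ 1 := by
        by_contra hs
        push_neg at hs
        have key : ∀ k : ℤ, 0 ≤ k → k ≤ 2 → k + 1 ≤ U → 2 ≤ V + k → False := by
          intro k hk0 hk2 hkU hkV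
          refine hx.2 (Pt a k) (Pt_mem a b N hN ht k hk0 hk2) ?_ ?_
          · intro heq
            have hq01 : Pt a k 0 + Pt a k 1 = 1 := by
              simp only [Pt, Matrix.cons_val_zero, Matrix.cons_val_one, Matrix.head_cons]
              ring
            rw [heq] at hq01
            have h2s : (2:ℝ) ≤ (s:ℝ) := by exact_mod_cast (by omega : (2:ℤ) ≤ s)
            linarith
          · rw [cone_iff]
            have d0 : (x - Pt a k) 0 = x 0 - ((k:ℝ) - Int.fract a) := by simp [Pt]
            have d1 : (x - Pt a k) 1 = x 1 - (1 - (k:ℝ) + Int.fract a) := by simp [Pt]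
            rw [d0, d1]
            have hkU' : (k:ℝ) + 1 ≤ (U:ℝ) := by exact_mod_cast hkU
            have hkV' : (2:ℝ) ≤ (V:ℝ) + (k:ℝ) := by exact_mod_cast hkV
            constructor <;> linarith
        rcases le_or_gt 2 V with hV2 | hV2
        · exact key 0 le_rfl (by norm_num) (by omega) (by omega)
        · exact key 2 (by norm_num) le_rfl (by omega) (by omega)
      have hse : s = 1 := le_antisymm hsle hs1
      have hs' : (s:ℝ) = 1 := by rw [hse]; norm_num
      have hxeq : x = Pt a (U - 1) := by
        funext j
        fin_cases j <;>
          simp only [Pt, Matrix.cons_val_zero, Matrix.cons_val_one, Matrix.head_cons,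
            Fin.zero_eta, Fin.mk_one] <;> push_cast <;> linarith
      have hUcase : U - 1 = 0 ∨ U - 1 = 1 ∨ U - 1 = 2 := by omega
      rcases hUcase with h | h | h <;> rw [hxeq, h] <;> tauto
    · rintro (rfl | rfl | rfl)
      · exact Pt_apex a b N hN ht 0 le_rfl (by norm_num)
      · exact Pt_apex a b N hN ht 1 (by norm_num) (by norm_num)
      · exact Pt_apex a b N hN ht 2 (by norm_num) le_rfl
  have Ptne : ∀ j k : ℤ, j ≠ k → Pt a j ≠ Pt a k := by
    intro j k hjk h
    have h0 := congrFun h 0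
    simp only [Pt, Matrix.cons_val_zero, sub_left_inj] at h0
    exact hjk (by exact_mod_cast h0)
  have hm1 : Pt a 1 ∉ ({Pt a 2} : Set (Fin 2 → ℝ)) := by
    simp only [Set.mem_singleton_iff]
    exact Ptne 1 2 (by norm_num)
  have hm0 : Pt a 0 ∉ ({Pt a 1, Pt a 2} : Set (Fin 2 → ℝ)) := by
    simp only [Set.mem_insert_iff, Set.mem_singleton_iff]
    push_neg
    exact ⟨Ptne 0 1 (by norm_num), Ptne 0 2 (by norm_num)⟩
  refine ⟨⟨?_, ?_⟩, ?_⟩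
  · rw [hSeq]
    exact ((Set.finite_singleton _).insert _).insert _
  · rw [hSeq, Set.ncard_insert_of_notMem hm0, Set.ncard_insert_of_notMem hm1,
      Set.ncard_singleton]
  · intro x hx
    have hx' : x ∈ {x : Fin 2 → ℝ | IsApex hornG3 ![-a, -b] x} := hx
    rw [hSeq] at hx'
    simp only [Set.mem_insert_iff, Set.mem_singleton_iff] at hx'
    rcases hx' with rfl | rfl | rfl <;>
      simp only [Pt, Matrix.cons_val_zero, Matrix.cons_val_one, Matrix.head_cons] <;> ring
end

section
/- Let A = {a_1, a_2, a_3, a_4} ⊂ ℤ^3 with a_1 = (1,0,0), a_2 = (0,1,0), a_3 = (0,0,1), a_4 = (1,1,−1), so that C(A) = {(x,y,z) ∈ ℝ^3 : x ≥ 0, y ≥ 0, x + z ≥ 0, y + z ≥ 0}. Let a, b, c ∈ ℝ with −1 < a < c < b < 0, and set α = (−a, −b, c−1). Then the points (−a, 1−b, c) and (−a, −b, 1+c) are both apexpoints of K_α. -/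
/-- The Euler–Gauss set `A = {(1,0,0), (0,1,0), (0,0,1), (1,1,-1)} ⊂ ℤ³`. -/
def gaussA : Fin 4 → Fin 3 → ℤ := ![![1, 0, 0], ![0, 1, 0], ![0, 0, 1], ![1, 1, -1]]

lemma mem_cone_gauss (x : Fin 3 → ℝ) :
    x ∈ coneOf gaussA ↔ 0 ≤ x 0 ∧ 0 ≤ x 1 ∧ 0 ≤ x 0 + x 2 ∧ 0 ≤ x 1 + x 2 := by
  constructor
  · rintro ⟨d, hd, hx⟩
    have h0 := congrFun hx 0
    have h1 := congrFun hx 1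
    have h2 := congrFun hx 2
    simp [gaussA, Fin.sum_univ_four] at h0 h1 h2
    have d0 := hd 0; have d1 := hd 1; have d2 := hd 2; have d3 := hd 3
    refine ⟨?_, ?_, ?_, ?_⟩ <;> linarith
  · rintro ⟨hx0, hx1, hx2, hx3⟩
    rcases le_or_gt 0 (x 2) with h | h
    · refine ⟨![x 0, x 1, x 2, 0], ?_, ?_⟩
      · intro i; fin_cases i <;> simp [hx0, hx1, h]
      · funext j; fin_cases j <;> simp [gaussA, Fin.sum_univ_four]
    · refine ⟨![x 0 + x 2, x 1 + x 2, 0, -(x 2)], ?_, ?_⟩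
      · intro i; fin_cases i <;> simp [hx2, hx3] <;> linarith
      · funext j; fin_cases j <;> simp [gaussA, Fin.sum_univ_four] <;> ring

/-- in the Euler–Gauss configuration with `-1 < a < c < b < 0` and
`α = (-a, -b, c-1)`, the points `(-a, 1-b, c)` and `(-a, -b, 1+c)` are apexpoints of `K_α`. -/
theorem gauss_interlacing_apexpoints (a b c : ℝ)
    (h1 : -1 < a) (h2 : a < c) (h3 : c < b) (h4 : b < 0) :
    IsApex gaussA ![-a, -b, c - 1] ![-a, 1 - b, c] ∧
    IsApex gaussA ![-a, -b, c - 1] ![-a, -b, 1 + c] := by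
  have ha0 : a < 0 := by linarith
  have hc0 : c < 0 := by linarith
  have hc1 : -1 < c := by linarith
  constructor
  · constructor
    · refine ⟨⟨![0, 1, 1], ?_⟩, ?_⟩
      · funext j; fin_cases j <;> simp <;> ring
      · rw [mem_cone_gauss]; simp; refine ⟨by linarith, by linarith, by linarith, by linarith⟩
    · rintro q ⟨⟨m, rfl⟩, hqC⟩ hne hpq
      rw [mem_cone_gauss] at hqC hpq
      simp at hqC hpq
      obtain ⟨q0, q1, q2, q3⟩ := hqC
      obtain ⟨p0, p1, p2, p3⟩ := hpq
      -- integer constraints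
      have i0 : m 0 = 0 := by
        have hlt : (-1 : ℝ) < (m 0 : ℝ) := by linarith
        have hlt' : (-1 : ℤ) < m 0 := by exact_mod_cast hlt
        omega
      have i2 : m 2 = 1 := by
        have hgt : (0 : ℝ) < (m 0 : ℝ) + (m 2 : ℝ) := by linarith
        have hle : (m 0 : ℝ) + (m 2 : ℝ) ≤ 1 := by linarith
        have hgt' : (0 : ℤ) < m 0 + m 2 := by exact_mod_cast hgt
        have hle' : m 0 + m 2 ≤ 1 := by exact_mod_cast hle
        omega
      have i1 : m 1 = 1 := by
        have hgt : (1 : ℝ) < (m 1 : ℝ) + (m 2 : ℝ) := by linarith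
        have hle : (m 1 : ℝ) + (m 2 : ℝ) ≤ 2 := by linarith
        have hgt' : (1 : ℤ) < m 1 + m 2 := by exact_mod_cast hgt
        have hle' : m 1 + m 2 ≤ 2 := by exact_mod_cast hle
        omega
      apply hne
      funext j; fin_cases j <;> simp [i0, i1, i2] <;> ring
  · constructor
    · refine ⟨⟨![0, 0, 2], ?_⟩, ?_⟩
      · funext j; fin_cases j <;> simp <;> ring
      · rw [mem_cone_gauss]; simp; refine ⟨by linarith, by linarith, by linarith, by linarith⟩
    · rintro q ⟨⟨m, rfl⟩, hqC⟩ hne hpq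
      rw [mem_cone_gauss] at hqC hpq
      simp at hqC hpq
      obtain ⟨q0, q1, q2, q3⟩ := hqC
      obtain ⟨p0, p1, p2, p3⟩ := hpq
      have i0 : m 0 = 0 := by
        have hlt : (-1 : ℝ) < (m 0 : ℝ) := by linarith
        have hlt' : (-1 : ℤ) < m 0 := by exact_mod_cast hlt
        omega
      have i1 : m 1 = 0 := by
        have hlt : (-1 : ℝ) < (m 1 : ℝ) := by linarith
        have hlt' : (-1 : ℤ) < m 1 := by exact_mod_cast hlt
        omega
      have i2 : m 2 = 2 := by
        have hgt : (1 : ℝ) < (m 1 : ℝ) + (m 2 : ℝ) := by linarith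
        have hle : (m 0 : ℝ) + (m 2 : ℝ) ≤ 2 := by linarith
        have hgt' : (1 : ℤ) < m 1 + m 2 := by exact_mod_cast hgt
        have hle' : m 0 + m 2 ≤ 2 := by exact_mod_cast hle
        omega
      apply hne
      funext j; fin_cases j <;> simp [i0, i1, i2] <;> ring
end
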